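/- arXiv:1212.0881 — 7 statements merged into one kernel-verified Lean document; each statement's English description precedes it below -/
import Mathlib

section
/- (Properties of the splitting sets.) Assume (A1)–(A4): (T, 𝒜, μ) is a measure space; Λ : T × Δ°(I) → ℝ₊ is μ-integrable in its first variable; M : T × Δ°(I) → ℝ is 𝒜-measurable in its first variable and M(t,·,·) is a two-variable mean on I for each t; M₀ : Δ°(I) → I is a strict mean such that μ{t : Λ(t,x,y) > 0 and M(t,x,y) ≠ M₀(x,y)} > 0 for all x < y in I; (ω₀, ω₁) is a Chebyshev system on I with ω₀ > 0 and ωᵢ(M₀(x,y)) = ∫_T Λ(t,x,y)·ωᵢ(M(t,x,y)) dμ(t) for i ∈ {0,1} and all x < y. Define T'_{x,y} := {t : Λ(t,x,y) > 0, M(t,x,y) < M₀(x,y)} and T''_{x,y} := {t : Λ(t,x,y) > 0, M(t,x,y) ≥ M₀(x,y)}, and Sᵢ'(x,y), Sᵢ''(x,y) as the integrals of Λ(t,x,y)ωᵢ(M(t,x,y)) over T'_{x,y} and T''_{x,y} respectively. Then for all x < y in I: Sᵢ'(x,y) + Sᵢ''(x,y) = ωᵢ(M₀(x,y)) for i ∈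 {0,1}, and both T'_{x,y} and T''_{x,y} have positive μ-measure. -/
open MeasureTheory

/-- Proposition on the splitting sets: under (A1)–(A4),
`Sᵢ'(x,y) + Sᵢ''(x,y) = ωᵢ(M₀(x,y))` for `i = 0,1`, and both `T'_{x,y}` and
`T''_{x,y}` have positive `μ`-measure. -/
theorem splitting_sets_properties
    (a b : ℝ) (hab : a < b)
    (ω₀ ω₁ : ℝ → ℝ)
    (hc₀ : ContinuousOn ω₀ (Set.Ioo a b)) (hc₁ : ContinuousOn ω₁ (Set.Ioo a b))
    (hω₀pos : ∀ z ∈ Set.Ioo a b, 0 < ω₀ z)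
    (hcheb : ∀ u ∈ Set.Ioo a b, ∀ v ∈ Set.Ioo a b, u < v →
        0 < ω₀ u * ω₁ v - ω₀ v * ω₁ u)
    {T : Type*} [MeasurableSpace T] (μ : Measure T)
    (Λ M : T → ℝ → ℝ → ℝ) (M₀ : ℝ → ℝ → ℝ)
    -- (A2): Λ is nonnegative and μ-integrable in its first variable
    (hΛnn : ∀ t x y, 0 ≤ Λ t x y)
    (hΛint : ∀ x ∈ Set.Ioo a b, ∀ y ∈ Set.Ioo a b, x < y →
        Integrable (fun t => Λ t x y) μ)
    -- (A3): M is measurable in its first variable and a two-variable mean; M₀ is a strict mean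
    (hMmeas : ∀ x y, Measurable (fun t => M t x y))
    (hMmean : ∀ t, ∀ x ∈ Set.Ioo a b, ∀ y ∈ Set.Ioo a b, x < y →
        M t x y ∈ Set.Icc x y)
    (hM₀strict : ∀ x ∈ Set.Ioo a b, ∀ y ∈ Set.Ioo a b, x < y →
        M₀ x y ∈ Set.Ioo x y)
    (hposmeas : ∀ x ∈ Set.Ioo a b, ∀ y ∈ Set.Ioo a b, x < y →
        0 < μ {t | 0 < Λ t x y ∧ M t x y ≠ M₀ x y})
    -- integrability of the weighted compositions
    (hint₀ : ∀ x ∈ Set.Ioo a b, ∀ y ∈ Set.Ioo a b, x < y →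
        Integrable (fun t => Λ t x y * ω₀ (M t x y)) μ)
    (hint₁ : ∀ x ∈ Set.Ioo a b, ∀ y ∈ Set.Ioo a b, x < y →
        Integrable (fun t => Λ t x y * ω₁ (M t x y)) μ)
    -- (A4): reproducing property
    (hrep₀ : ∀ x ∈ Set.Ioo a b, ∀ y ∈ Set.Ioo a b, x < y →
        ω₀ (M₀ x y) = ∫ t, Λ t x y * ω₀ (M t x y) ∂μ)
    (hrep₁ : ∀ x ∈ Set.Ioo a b, ∀ y ∈ Set.Ioo a b, x < y →
        ω₁ (M₀ x y) = ∫ t, Λ t x y * ω₁ (M t x y) ∂μ) :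
    ∀ x ∈ Set.Ioo a b, ∀ y ∈ Set.Ioo a b, x < y →
      ((∫ t in {t | 0 < Λ t x y ∧ M t x y < M₀ x y}, Λ t x y * ω₀ (M t x y) ∂μ) +
          (∫ t in {t | 0 < Λ t x y ∧ M₀ x y ≤ M t x y}, Λ t x y * ω₀ (M t x y) ∂μ) =
        ω₀ (M₀ x y)) ∧
      ((∫ t in {t | 0 < Λ t x y ∧ M t x y < M₀ x y}, Λ t x y * ω₁ (M t x y) ∂μ) +
          (∫ t in {t | 0 < Λ t x y ∧ M₀ x y ≤ M t x y}, Λ t x y * ω₁ (M t x y) ∂μ) =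
        ω₁ (M₀ x y)) ∧
      0 < μ {t | 0 < Λ t x y ∧ M t x y < M₀ x y} ∧
      0 < μ {t | 0 < Λ t x y ∧ M₀ x y ≤ M t x y} := by
  intro x hx y hy hxy
  set m₀ := M₀ x y with hm₀def
  have hm₀ : m₀ ∈ Set.Ioo x y := hM₀strict x hx y hy hxy
  have hm₀ab : m₀ ∈ Set.Ioo a b := ⟨hx.1.trans hm₀.1, hm₀.2.trans hy.2⟩
  have hMab : ∀ t, M t x y ∈ Set.Ioo a b := by
    intro t
    have h := hMmean t x hx y hy hxy
    exact ⟨lt_of_lt_of_le hx.1 h.1, lt_of_le_of_lt h.2 hy.2⟩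
  -- measurable set A
  set A : Set T := {t | M t x y < m₀} with hAdef
  have hA : MeasurableSet A := measurableSet_lt (hMmeas x y) measurable_const
  set S : Set T := {t | 0 < Λ t x y} with hSdef
  have hT' : {t | 0 < Λ t x y ∧ M t x y < m₀} = A ∩ S := by
    ext t; simp [hAdef, hSdef, and_comm]
  have hT'' : {t | 0 < Λ t x y ∧ m₀ ≤ M t x y} = Aᶜ ∩ S := by
    ext t; simp [hAdef, hSdef, and_comm, not_lt]
  -- splitting of integrals
  have hsplit : ∀ f : ℝ → ℝ, Integrable (fun t => Λ t x y * f (M t x y)) μ →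
      (∫ t in {t | 0 < Λ t x y ∧ M t x y < m₀}, Λ t x y * f (M t x y) ∂μ) +
      (∫ t in {t | 0 < Λ t x y ∧ m₀ ≤ M t x y}, Λ t x y * f (M t x y) ∂μ) =
      ∫ t, Λ t x y * f (M t x y) ∂μ := by
    intro f hf
    rw [hT', hT'', ← Measure.restrict_restrict hA, ← Measure.restrict_restrict hA.compl]
    rw [integral_add_compl hA (hf.restrict)]
    apply setIntegral_eq_integral_of_forall_compl_eq_zero
    intro t ht
    have : Λ t x y = 0 := le_antisymm (not_lt.mp ht) (hΛnn t x y)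
    simp [this]
  have h0 := hsplit ω₀ (hint₀ x hx y hy hxy)
  have h1 := hsplit ω₁ (hint₁ x hx y hy hxy)
  rw [← hrep₀ x hx y hy hxy] at h0
  rw [← hrep₁ x hx y hy hxy] at h1
  refine ⟨h0, h1, ?_, ?_⟩ <;> by_contra hcon <;>
    rw [not_lt, le_zero_iff] at hcon
  -- common setup for both contradictions
  case _ =>
    -- μ T' = 0
    set g : T → ℝ := fun t => ω₀ m₀ * (Λ t x y * ω₁ (M t x y)) -
      ω₁ m₀ * (Λ t x y * ω₀ (M t x y)) with hgdef
    have hgint : Integrable g μ :=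
      ((hint₁ x hx y hy hxy).const_mul _).sub ((hint₀ x hx y hy hxy).const_mul _)
    have hgzero : ∫ t, g t ∂μ = 0 := by
      rw [hgdef]
      rw [integral_sub ((hint₁ x hx y hy hxy).const_mul _)
        ((hint₀ x hx y hy hxy).const_mul _), integral_const_mul, integral_const_mul,
        ← hrep₀ x hx y hy hxy, ← hrep₁ x hx y hy hxy]
      ring
    have hfact : ∀ t, g t = Λ t x y * (ω₀ m₀ * ω₁ (M t x y) - ω₁ m₀ * ω₀ (M t x y)) := by
      intro t; rw [hgdef]; ring
    have hgnn : 0 ≤ᵐ[μ] g := by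
      rw [Filter.EventuallyLE, ae_iff]
      refine measure_mono_null ?_ hcon
      intro t ht
      simp only [Set.mem_setOf_eq, Pi.zero_apply, not_le] at ht
      have hΛpos : 0 < Λ t x y := by
        rcases lt_or_eq_of_le (hΛnn t x y) with h | h
        · exact h
        · exfalso; rw [hfact t, ← h, zero_mul] at ht; exact lt_irrefl 0 ht
      refine ⟨hΛpos, ?_⟩
      by_contra hM
      rw [not_lt] at hM
      rcases eq_or_lt_of_le hM with h | h
      · rw [hfact t, ← h] at ht; nlinarith
      · have := hcheb m₀ hm₀ab (M t x y) (hMab t) h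
        rw [hfact t] at ht; nlinarith
    have hgae : g =ᵐ[μ] 0 :=
      (integral_eq_zero_iff_of_nonneg_ae hgnn hgint).mp hgzero
    have hsub : {t | 0 < Λ t x y ∧ M t x y ≠ m₀} ⊆ {t | g t ≠ 0} := by
      intro t ⟨hΛ, hM⟩
      rcases lt_or_gt_of_ne hM with h | h
      · have h2 := hcheb (M t x y) (hMab t) m₀ hm₀ab h
        rw [Set.mem_setOf_eq, hfact t]
        exact (mul_neg_of_pos_of_neg hΛ (by nlinarith)).ne
      · have h2 := hcheb m₀ hm₀ab (M t x y) (hMab t) h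
        rw [Set.mem_setOf_eq, hfact t]
        exact (mul_pos hΛ (by nlinarith)).ne'
    have := measure_mono_null hsub (ae_iff.mp hgae)
    exact absurd this (hposmeas x hx y hy hxy).ne'
  case _ =>
    -- μ T'' = 0
    set g : T → ℝ := fun t => ω₁ m₀ * (Λ t x y * ω₀ (M t x y)) -
      ω₀ m₀ * (Λ t x y * ω₁ (M t x y)) with hgdef
    have hgint : Integrable g μ :=
      ((hint₀ x hx y hy hxy).const_mul _).sub ((hint₁ x hx y hy hxy).const_mul _)
    have hgzero : ∫ t, g t ∂μ = 0 := by
      rw [hgdef]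
      rw [integral_sub ((hint₀ x hx y hy hxy).const_mul _)
        ((hint₁ x hx y hy hxy).const_mul _), integral_const_mul, integral_const_mul,
        ← hrep₀ x hx y hy hxy, ← hrep₁ x hx y hy hxy]
      ring
    have hfact : ∀ t, g t = Λ t x y * (ω₁ m₀ * ω₀ (M t x y) - ω₀ m₀ * ω₁ (M t x y)) := by
      intro t; rw [hgdef]; ring
    have hgnn : 0 ≤ᵐ[μ] g := by
      rw [Filter.EventuallyLE, ae_iff]
      refine measure_mono_null ?_ hcon
      intro t ht
      simp only [Set.mem_setOf_eq, Pi.zero_apply, not_le] at ht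
      have hΛpos : 0 < Λ t x y := by
        rcases lt_or_eq_of_le (hΛnn t x y) with h | h
        · exact h
        · exfalso; rw [hfact t, ← h, zero_mul] at ht; exact lt_irrefl 0 ht
      refine ⟨hΛpos, ?_⟩
      by_contra hM
      rw [not_le] at hM
      have := hcheb (M t x y) (hMab t) m₀ hm₀ab hM
      rw [hfact t] at ht; nlinarith
    have hgae : g =ᵐ[μ] 0 :=
      (integral_eq_zero_iff_of_nonneg_ae hgnn hgint).mp hgzero
    have hsub : {t | 0 < Λ t x y ∧ M t x y ≠ m₀} ⊆ {t | g t ≠ 0} := by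
      intro t ⟨hΛ, hM⟩
      rcases lt_or_gt_of_ne hM with h | h
      · have h2 := hcheb (M t x y) (hMab t) m₀ hm₀ab h
        rw [Set.mem_setOf_eq, hfact t]
        exact (mul_pos hΛ (by nlinarith)).ne'
      · have h2 := hcheb m₀ hm₀ab (M t x y) (hMab t) h
        rw [Set.mem_setOf_eq, hfact t]
        exact (mul_neg_of_pos_of_neg hΛ (by nlinarith)).ne
    have := measure_mono_null hsub (ae_iff.mp hgae)
    exact absurd this (hposmeas x hx y hy hxy).ne'
end

section
/- (Approximate lower Hermite–Hadamard inequality for (ω₀,ω₁)-convexity.) Assume (A1)–(A4) as above. Let f : I → ℝ be a locally upper bounded Borel measurable function satisfying f(u) ≤ (Ω(u,y)/Ω(x,y))f(x) + (Ω(x,u)/Ω(x,y))f(y) + ε_{x,y}(u) for all x < y in I and u ∈ [x,y], where for fixed x < u < y, (v,w) ↦ ε_{v,w}(u) is bounded and Borel measurable on [x,u] × [u,y]. Then for all x < y in I, f(M₀(x,y)) ≤ ∫_T Λ(t,x,y) f(M(t,x,y)) dμ(t) + E(x,y), where E(x,y) := [∬_{T'×T''} Λ(t')Λ(t'')Ω(M(t'),M(t''))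 ε_{M(t'),M(t'')}(M₀(x,y)) dμ dμ] / [∬_{T'×T''} Λ(t')Λ(t'')Ω(M(t'),M(t'')) dμ dμ], with T' = T'_{x,y}, T'' = T''_{x,y}, Λ(t) = Λ(t,x,y), M(t) = M(t,x,y). -/
open MeasureTheory

/-!
Absorb the weight into the finite measure `ν = Λ(·,x,y) μ`, and let `c = M₀(x,y)`,
`S' = {M < c}`, `S'' = {c ≤ M}`. For `t' ∈ S'`, `t'' ∈ S''` the approximate convexity
inequality at the points `M t' < c ≤ M t''`, multiplied by `Ω(M t', M t'') > 0`, is linear in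
`(ω₀, ω₁, f)` at each of the two points. Integrating it over `S' × S''` and using
`ωᵢ(c) = ∫ ωᵢ ∘ M dν`, both `f`-terms collapse to `D · ∫ f ∘ M dν`, where
`D = ∫∫ Ω(M t', M t'')` is the denominator of the error term. Finally `D > 0`: the function
`Ω(c, M t)` has the sign of `M t - c` and integral `0`, so neither `S'` nor `S''` is null.
-/

section Density

variable {T : Type*} [MeasurableSpace T] {μ : Measure T} {w : T → ℝ}

theorem integral_withDensity_ofReal (hw : ∀ t, 0 ≤ w t) (hwm : AEMeasurable w μ) (g : T → ℝ) :
    ∫ t, g t ∂μ.withDensity (fun t => ENNReal.ofReal (w t)) = ∫ t, w t * g t ∂μ := by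
  rw [integral_withDensity_eq_integral_toReal_smul₀ hwm.ennreal_ofReal
    (ae_of_all _ fun _ => ENNReal.ofReal_lt_top)]
  simp_rw [ENNReal.toReal_ofReal (hw _), smul_eq_mul]

theorem setIntegral_withDensity_ofReal (hw : ∀ t, 0 ≤ w t) (hwm : AEMeasurable w μ)
    {p : T → Prop} (hp : MeasurableSet {t | p t}) (g : T → ℝ) :
    ∫ t in {t | p t}, g t ∂μ.withDensity (fun t => ENNReal.ofReal (w t)) =
      ∫ t in {t | 0 < w t ∧ p t}, w t * g t ∂μ := by
  rw [restrict_withDensity hp, integral_withDensity_ofReal hw hwm.restrict,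
    setIntegral_eq_of_subset_of_forall_sdiff_eq_zero (s := {t | 0 < w t ∧ p t}) hp
      fun t ht => ht.2]
  rintro t ⟨htp, ht⟩
  rw [le_antisymm (not_lt.1 fun h => ht ⟨h, htp⟩) (hw t), zero_mul]

theorem setIntegral_setIntegral_withDensity_ofReal (hw : ∀ t, 0 ≤ w t) (hwm : AEMeasurable w μ)
    {p q : T → Prop} (hp : MeasurableSet {t | p t}) (hq : MeasurableSet {t | q t})
    (k : T → T → ℝ) :
    ∫ t' in {t | p t}, ∫ t'' in {t | q t}, k t' t''
        ∂μ.withDensity (fun t => ENNReal.ofReal (w t))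
        ∂μ.withDensity (fun t => ENNReal.ofReal (w t)) =
      ∫ t' in {t | 0 < w t ∧ p t}, ∫ t'' in {t | 0 < w t ∧ q t},
        w t' * w t'' * k t' t'' ∂μ ∂μ := by
  simp_rw [setIntegral_withDensity_ofReal hw hwm hq, mul_assoc, integral_const_mul]
  exact setIntegral_withDensity_ofReal hw hwm hp _

theorem integrable_withDensity_ofReal_iff (hw : ∀ t, 0 ≤ w t) (hwm : AEMeasurable w μ)
    {g : T → ℝ} :
    Integrable g (μ.withDensity fun t => ENNReal.ofReal (w t)) ↔
      Integrable (fun t => w t * g t) μ := by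
  rw [integrable_withDensity_iff_integrable_smul₀' hwm.ennreal_ofReal
    (ae_of_all _ fun _ => ENNReal.ofReal_lt_top)]
  simp_rw [ENNReal.toReal_ofReal (hw _), smul_eq_mul]

theorem withDensity_ofReal_pos_iff (hwm : AEMeasurable w μ) {p : T → Prop} :
    0 < μ.withDensity (fun t => ENNReal.ofReal (w t)) {t | p t} ↔ 0 < μ {t | 0 < w t ∧ p t} := by
  simp_rw [pos_iff_ne_zero, ne_eq, withDensity_apply_eq_zero' hwm.ennreal_ofReal, ne_eq,
    ENNReal.ofReal_eq_zero, not_le]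
  rfl

end Density

theorem integral_prod_mul_sub_mul {α β : Type*} [MeasurableSpace α] [MeasurableSpace β]
    {μ : Measure α} {ν : Measure β} [SFinite μ] [SFinite ν] {g₀ g₁ : α → ℝ} {h₀ h₁ : β → ℝ}
    (hg₀ : Integrable g₀ μ) (hg₁ : Integrable g₁ μ) (hh₀ : Integrable h₀ ν)
    (hh₁ : Integrable h₁ ν) :
    ∫ p, (g₀ p.1 * h₁ p.2 - g₁ p.1 * h₀ p.2) ∂μ.prod ν =
      (∫ a, g₀ a ∂μ) * (∫ b, h₁ b ∂ν) - (∫ a, g₁ a ∂μ) * ∫ b, h₀ b ∂ν := by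
  rw [integral_sub (hg₀.mul_prod hh₁) (hg₁.mul_prod hh₀), integral_prod_mul, integral_prod_mul]

theorem MeasureTheory.Measure.prod_restrict_ne_zero {α β : Type*} [MeasurableSpace α] [MeasurableSpace β]
    {μ : Measure α} {ν : Measure β} [SFinite ν] {s : Set α} {t : Set β} (hs : μ s ≠ 0)
    (ht : ν t ≠ 0) :
    (μ.restrict s).prod (ν.restrict t) ≠ 0 := by
  rw [← Measure.measure_univ_ne_zero, ← Set.univ_prod_univ, Measure.prod_prod,
    Measure.restrict_apply_univ, Measure.restrict_apply_univ]
  exact mul_ne_zero hs ht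

theorem measure_setOf_pos_pos_of_integral_eq_zero {α : Type*} [MeasurableSpace α]
    {μ : Measure α} {g : α → ℝ} (hg : Integrable g μ) (h0 : ∫ a, g a ∂μ = 0)
    (hne : 0 < μ {a | g a ≠ 0}) : 0 < μ {a | 0 < g a} := by
  by_contra! hle
  have hnonpos : g ≤ᵐ[μ] 0 := by
    rw [Filter.EventuallyLE, ae_iff]
    simpa only [Pi.zero_apply, not_le] using le_antisymm hle bot_le
  have hzero : -g =ᵐ[μ] 0 := by
    rw [← integral_eq_zero_iff_of_nonneg_ae (hnonpos.mono fun a ha => by simpa using ha) hg.neg]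
    simp [integral_neg, h0]
  refine hne.ne' (measure_mono_null (fun a ha => ?_) (ae_iff.1 hzero))
  simpa using ha

/-- The determinant `Ω(u, v)` of the paper. -/
def chebyshevDet (ω₀ ω₁ : ℝ → ℝ) (u v : ℝ) : ℝ := ω₀ u * ω₁ v - ω₀ v * ω₁ u

theorem chebyshevDet_swap (ω₀ ω₁ : ℝ → ℝ) (u v : ℝ) :
    chebyshevDet ω₀ ω₁ v u = -chebyshevDet ω₀ ω₁ u v := by
  unfold chebyshevDet; ring

theorem chebyshevDet_self (ω₀ ω₁ : ℝ → ℝ) (u : ℝ) : chebyshevDet ω₀ ω₁ u u = 0 := by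
  unfold chebyshevDet; ring

section Chebyshev

variable {ω₀ ω₁ : ℝ → ℝ} {I : Set ℝ}

theorem chebyshevDet_pos_iff (hΩ : ∀ u ∈ I, ∀ v ∈ I, u < v → 0 < chebyshevDet ω₀ ω₁ u v)
    {u v : ℝ} (hu : u ∈ I) (hv : v ∈ I) :
    0 < chebyshevDet ω₀ ω₁ u v ↔ u < v := by
  refine ⟨fun h => ?_, hΩ u hu v hv⟩
  by_contra! hvu
  rcases hvu.lt_or_eq with hlt | rfl
  · linarith [hΩ v hv u hu hlt, chebyshevDet_swap ω₀ ω₁ v u]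
  · exact h.ne' (chebyshevDet_self ω₀ ω₁ v)

theorem chebyshevDet_neg_iff (hΩ : ∀ u ∈ I, ∀ v ∈ I, u < v → 0 < chebyshevDet ω₀ ω₁ u v)
    {u v : ℝ} (hu : u ∈ I) (hv : v ∈ I) :
    chebyshevDet ω₀ ω₁ u v < 0 ↔ v < u := by
  rw [← chebyshevDet_pos_iff hΩ hv hu, chebyshevDet_swap, neg_lt_zero]

end Chebyshev

section Moments

variable {T : Type*} [MeasurableSpace T] {ν : Measure T}
  {ω₀ ω₁ f : ℝ → ℝ} {m : T → ℝ} {c : ℝ} {I : Set ℝ}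

theorem integrable_chebyshevDet_const_left (hω₀ : Integrable (fun t => ω₀ (m t)) ν)
    (hω₁ : Integrable (fun t => ω₁ (m t)) ν) (c : ℝ) :
    Integrable (fun t => chebyshevDet ω₀ ω₁ c (m t)) ν :=
  (hω₁.const_mul _).sub (hω₀.mul_const _)

theorem integral_chebyshevDet_const_left (hω₀ : Integrable (fun t => ω₀ (m t)) ν)
    (hω₁ : Integrable (fun t => ω₁ (m t)) ν) (c : ℝ) :
    ∫ t, chebyshevDet ω₀ ω₁ c (m t) ∂ν =
      ω₀ c * (∫ t, ω₁ (m t) ∂ν) - (∫ t, ω₀ (m t) ∂ν) * ω₁ c := by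
  rw [← integral_const_mul, ← integral_mul_const, ← integral_sub (hω₁.const_mul _)
    (hω₀.mul_const _)]
  rfl

theorem measure_lt_pos_and_measure_gt_pos (hmI : ∀ t, m t ∈ I) (hcI : c ∈ I)
    (hΩ : ∀ u ∈ I, ∀ v ∈ I, u < v → 0 < chebyshevDet ω₀ ω₁ u v)
    (hω₀ : Integrable (fun t => ω₀ (m t)) ν) (hω₁ : Integrable (fun t => ω₁ (m t)) ν)
    (hrep₀ : ω₀ c = ∫ t, ω₀ (m t) ∂ν) (hrep₁ : ω₁ c = ∫ t, ω₁ (m t) ∂ν)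
    (hpos : 0 < ν {t | m t ≠ c}) :
    0 < ν {t | m t < c} ∧ 0 < ν {t | c < m t} := by
  have hint := integrable_chebyshevDet_const_left hω₀ hω₁ c
  have h0 : ∫ t, chebyshevDet ω₀ ω₁ c (m t) ∂ν = 0 := by
    rw [integral_chebyshevDet_const_left hω₀ hω₁, ← hrep₀, ← hrep₁, mul_comm, sub_self]
  have hne : {t | m t ≠ c} = {t | chebyshevDet ω₀ ω₁ c (m t) ≠ 0} := by
    ext t
    simp only [Set.mem_ofPred_eq, ne_iff_lt_or_gt, chebyshevDet_pos_iff hΩ hcI (hmI t),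
      chebyshevDet_neg_iff hΩ hcI (hmI t)]
  rw [hne] at hpos
  constructor
  · simpa only [neg_pos, chebyshevDet_neg_iff hΩ hcI (hmI _)] using
      measure_setOf_pos_pos_of_integral_eq_zero (g := fun t => -chebyshevDet ω₀ ω₁ c (m t))
        hint.neg (by rw [integral_neg, h0, neg_zero])
        (by simpa only [ne_eq, neg_eq_zero] using hpos)
  · simpa only [chebyshevDet_pos_iff hΩ hcI (hmI _)] using
      measure_setOf_pos_pos_of_integral_eq_zero hint h0 hpos

section Product

variable {ν₁ ν₂ : Measure T}

theorem integrable_chebyshevDet_prod (hω₀₁ : Integrable (fun t => ω₀ (m t)) ν₁)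
    (hω₁₁ : Integrable (fun t => ω₁ (m t)) ν₁) (hω₀₂ : Integrable (fun t => ω₀ (m t)) ν₂)
    (hω₁₂ : Integrable (fun t => ω₁ (m t)) ν₂) :
    Integrable (fun p : T × T => chebyshevDet ω₀ ω₁ (m p.1) (m p.2)) (ν₁.prod ν₂) :=
  ((hω₀₁.mul_prod hω₁₂).sub (hω₁₁.mul_prod hω₀₂)).congr
    (ae_of_all _ fun p => by simp only [Pi.sub_apply, chebyshevDet]; ring)

theorem integral_chebyshevDet_prod [SFinite ν₁] [SFinite ν₂]
    (hω₀₁ : Integrable (fun t => ω₀ (m t)) ν₁)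
    (hω₁₁ : Integrable (fun t => ω₁ (m t)) ν₁) (hω₀₂ : Integrable (fun t => ω₀ (m t)) ν₂)
    (hω₁₂ : Integrable (fun t => ω₁ (m t)) ν₂) :
    ∫ p, chebyshevDet ω₀ ω₁ (m p.1) (m p.2) ∂ν₁.prod ν₂ =
      (∫ t, ω₀ (m t) ∂ν₁) * (∫ t, ω₁ (m t) ∂ν₂) - (∫ t, ω₁ (m t) ∂ν₁) * ∫ t, ω₀ (m t) ∂ν₂ := by
  rw [← integral_prod_mul_sub_mul hω₀₁ hω₁₁ hω₀₂ hω₁₂]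
  exact integral_congr_ae (ae_of_all _ fun p => by unfold chebyshevDet; ring)

theorem integral_chebyshevDet_prod_pos (hmI : ∀ t, m t ∈ I)
    (hΩ : ∀ u ∈ I, ∀ v ∈ I, u < v → 0 < chebyshevDet ω₀ ω₁ u v)
    (hω₀₁ : Integrable (fun t => ω₀ (m t)) ν₁)
    (hω₁₁ : Integrable (fun t => ω₁ (m t)) ν₁) (hω₀₂ : Integrable (fun t => ω₀ (m t)) ν₂)
    (hω₁₂ : Integrable (fun t => ω₁ (m t)) ν₂) (hlt : ∀ᵐ p ∂ν₁.prod ν₂, m p.1 < m p.2)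
    (hne : ν₁.prod ν₂ ≠ 0) :
    0 < ∫ p, chebyshevDet ω₀ ω₁ (m p.1) (m p.2) ∂ν₁.prod ν₂ := by
  have hpos : ∀ᵐ p ∂ν₁.prod ν₂, 0 < chebyshevDet ω₀ ω₁ (m p.1) (m p.2) :=
    hlt.mono fun p hp => hΩ _ (hmI _) _ (hmI _) hp
  rw [integral_pos_iff_support_of_nonneg_ae (hpos.mono fun p hp => hp.le)
    (integrable_chebyshevDet_prod hω₀₁ hω₁₁ hω₀₂ hω₁₂)]
  refine pos_iff_ne_zero.2 fun h0 => hne (ae_eq_bot.1 ?_)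
  refine Filter.eventually_false_iff_eq_bot.1 ?_
  filter_upwards [hpos, measure_eq_zero_iff_ae_notMem.1 h0] with p hp hp0
  exact hp0 hp.ne'

end Product

theorem integral_wedge_chebyshevDet_prod_compl [SFinite ν] {s : Set T} (hs : MeasurableSet s)
    (hω₀ : Integrable (fun t => ω₀ (m t)) ν) (hω₁ : Integrable (fun t => ω₁ (m t)) ν)
    (hf : Integrable (fun t => f (m t)) ν)
    (hrep₀ : ω₀ c = ∫ t, ω₀ (m t) ∂ν) (hrep₁ : ω₁ c = ∫ t, ω₁ (m t) ∂ν) :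
    ∫ p, (f (m p.1) * chebyshevDet ω₀ ω₁ c (m p.2) - chebyshevDet ω₀ ω₁ c (m p.1) * f (m p.2))
        ∂(ν.restrict s).prod (ν.restrict sᶜ) =
      (∫ p, chebyshevDet ω₀ ω₁ (m p.1) (m p.2) ∂(ν.restrict s).prod (ν.restrict sᶜ)) *
        ∫ t, f (m t) ∂ν := by
  have ha := integrable_chebyshevDet_const_left hω₀ hω₁ c
  rw [integral_prod_mul_sub_mul hf.restrict ha.restrict hf.restrict ha.restrict,
    integral_chebyshevDet_prod hω₀.restrict hω₁.restrict hω₀.restrict hω₁.restrict,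
    integral_chebyshevDet_const_left hω₀.restrict hω₁.restrict,
    integral_chebyshevDet_const_left hω₀.restrict hω₁.restrict, hrep₀, hrep₁,
    ← integral_add_compl hs hω₀, ← integral_add_compl hs hω₁, ← integral_add_compl hs hf]
  ring

theorem ae_lt_le_prod_restrict_compl [SFinite ν] (hm : Measurable m) :
    ∀ᵐ p ∂(ν.restrict {t | m t < c}).prod (ν.restrict {t | m t < c}ᶜ), m p.1 < c ∧ c ≤ m p.2 := by
  rw [Measure.prod_restrict]
  exact ae_restrict_of_forall_mem ((measurableSet_lt hm measurable_const).prod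
    (measurableSet_lt hm measurable_const).compl) fun p hp => ⟨hp.1, not_lt.1 hp.2⟩

theorem integral_chebyshevDet_prod_mul_le [SFinite ν] {e : ℝ → ℝ → ℝ} (hm : Measurable m)
    (hmI : ∀ t, m t ∈ I) (hω₀ : Integrable (fun t => ω₀ (m t)) ν)
    (hω₁ : Integrable (fun t => ω₁ (m t)) ν) (hf : Integrable (fun t => f (m t)) ν)
    (hrep₀ : ω₀ c = ∫ t, ω₀ (m t) ∂ν) (hrep₁ : ω₁ c = ∫ t, ω₁ (m t) ∂ν)
    (he : Integrable (fun p : T × T => chebyshevDet ω₀ ω₁ (m p.1) (m p.2) * e (m p.1) (m p.2))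
      ((ν.restrict {t | m t < c}).prod (ν.restrict {t | m t < c}ᶜ)))
    (hconv : ∀ u ∈ I, ∀ v ∈ I, u < c → c ≤ v →
      chebyshevDet ω₀ ω₁ u v * f c ≤ chebyshevDet ω₀ ω₁ c v * f u +
        chebyshevDet ω₀ ω₁ u c * f v + chebyshevDet ω₀ ω₁ u v * e u v) :
    (∫ p, chebyshevDet ω₀ ω₁ (m p.1) (m p.2)
        ∂(ν.restrict {t | m t < c}).prod (ν.restrict {t | m t < c}ᶜ)) * f c ≤
      (∫ p, chebyshevDet ω₀ ω₁ (m p.1) (m p.2)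
          ∂(ν.restrict {t | m t < c}).prod (ν.restrict {t | m t < c}ᶜ)) * ∫ t, f (m t) ∂ν +
        ∫ p, chebyshevDet ω₀ ω₁ (m p.1) (m p.2) * e (m p.1) (m p.2)
          ∂(ν.restrict {t | m t < c}).prod (ν.restrict {t | m t < c}ᶜ) := by
  have ha := integrable_chebyshevDet_const_left hω₀ hω₁ c
  have hwedge : Integrable (fun p : T × T =>
      f (m p.1) * chebyshevDet ω₀ ω₁ c (m p.2) - chebyshevDet ω₀ ω₁ c (m p.1) * f (m p.2))
      ((ν.restrict {t | m t < c}).prod (ν.restrict {t | m t < c}ᶜ)) :=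
    (hf.restrict.mul_prod ha.restrict).sub (ha.restrict.mul_prod hf.restrict)
  rw [← integral_mul_const, ← integral_wedge_chebyshevDet_prod_compl
    (measurableSet_lt hm measurable_const) hω₀ hω₁ hf hrep₀ hrep₁, ← integral_add hwedge he]
  refine integral_mono_ae
    ((integrable_chebyshevDet_prod hω₀.restrict hω₁.restrict hω₀.restrict hω₁.restrict).mul_const _)
    (hwedge.add he) ((ae_lt_le_prod_restrict_compl hm).mono fun p hp => ?_)
  have := hconv _ (hmI p.1) _ (hmI p.2) hp.1 hp.2
  rw [chebyshevDet_swap ω₀ ω₁ c] at this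
  dsimp only
  linarith

theorem approx_lower_hermite_hadamard_of_sFinite [SFinite ν] {e : ℝ → ℝ → ℝ}
    (hm : Measurable m) (hmI : ∀ t, m t ∈ I) (hcI : c ∈ I)
    (hΩ : ∀ u ∈ I, ∀ v ∈ I, u < v → 0 < chebyshevDet ω₀ ω₁ u v)
    (hω₀ : Integrable (fun t => ω₀ (m t)) ν) (hω₁ : Integrable (fun t => ω₁ (m t)) ν)
    (hf : Integrable (fun t => f (m t)) ν)
    (hrep₀ : ω₀ c = ∫ t, ω₀ (m t) ∂ν) (hrep₁ : ω₁ c = ∫ t, ω₁ (m t) ∂ν)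
    (hpos : 0 < ν {t | m t ≠ c})
    (he : Measurable fun p : ℝ × ℝ => e p.1 p.2)
    (he_bdd : ∃ C, ∀ u ∈ I, ∀ v ∈ I, u < c → c ≤ v → |e u v| ≤ C)
    (hconv : ∀ u ∈ I, ∀ v ∈ I, u < c → c ≤ v →
      chebyshevDet ω₀ ω₁ u v * f c ≤ chebyshevDet ω₀ ω₁ c v * f u +
        chebyshevDet ω₀ ω₁ u c * f v + chebyshevDet ω₀ ω₁ u v * e u v) :
    f c ≤ ∫ t, f (m t) ∂ν +
      (∫ t' in {t | m t < c}, ∫ t'' in {t | c ≤ m t},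
          chebyshevDet ω₀ ω₁ (m t') (m t'') * e (m t') (m t'') ∂ν ∂ν) /
        ∫ t' in {t | m t < c}, ∫ t'' in {t | c ≤ m t},
          chebyshevDet ω₀ ω₁ (m t') (m t'') ∂ν ∂ν := by
  have hcompl : {t | c ≤ m t} = {t | m t < c}ᶜ := by ext; simp
  obtain ⟨hlt, hgt⟩ := measure_lt_pos_and_measure_gt_pos hmI hcI hΩ hω₀ hω₁ hrep₀ hrep₁ hpos
  have hP := ae_lt_le_prod_restrict_compl (ν := ν) (c := c) hm
  rw [hcompl]
  set S := {t | m t < c}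
  have hge : ν Sᶜ ≠ 0 := (hgt.trans_le (measure_mono fun t (ht : c < m t) => not_lt.2 ht.le)).ne'
  have hΩint : Integrable (fun p : T × T => chebyshevDet ω₀ ω₁ (m p.1) (m p.2))
      ((ν.restrict S).prod (ν.restrict Sᶜ)) :=
    integrable_chebyshevDet_prod hω₀.restrict hω₁.restrict hω₀.restrict hω₁.restrict
  have hkint : Integrable (fun p : T × T => chebyshevDet ω₀ ω₁ (m p.1) (m p.2) *
      e (m p.1) (m p.2)) ((ν.restrict S).prod (ν.restrict Sᶜ)) := by
    obtain ⟨C, hC⟩ := he_bdd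
    exact hΩint.mul_bdd (he.comp ((hm.comp measurable_fst).prodMk
      (hm.comp measurable_snd))).aestronglyMeasurable
      (hP.mono fun p hp => hC _ (hmI _) _ (hmI _) hp.1 hp.2)
  have hD := integral_chebyshevDet_prod_pos hmI hΩ hω₀.restrict hω₁.restrict hω₀.restrict
    hω₁.restrict (hP.mono fun p hp => hp.1.trans_le hp.2)
    (Measure.prod_restrict_ne_zero hlt.ne' hge)
  have hmono := integral_chebyshevDet_prod_mul_le hm hmI hω₀ hω₁ hf hrep₀ hrep₁ hkint hconv
  have hN := integral_prod _ hkint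
  have hD' := integral_prod _ hΩint
  dsimp only at hN hD'
  rw [← hN, ← hD', ← sub_le_iff_le_add', le_div_iff₀ hD]
  linarith

end Moments

theorem mul_le_of_le_div_mul_add_div_mul {d p q a b z e : ℝ} (hd : 0 < d)
    (h : z ≤ p / d * a + q / d * b + e) : d * z ≤ p * a + q * b + d * e := by
  calc d * z ≤ d * (p / d * a + q / d * b + e) := mul_le_mul_of_nonneg_left h hd.le
    _ = p * a + q * b + d * e := by field_simp

theorem approx_lower_hermite_hadamard_general
    (a b : ℝ)
    (ω₀ ω₁ : ℝ → ℝ)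
    (hcheb : ∀ u ∈ Set.Ioo a b, ∀ v ∈ Set.Ioo a b, u < v →
        0 < ω₀ u * ω₁ v - ω₀ v * ω₁ u)
    {T : Type*} [MeasurableSpace T] (μ : Measure T)
    (Λ M : T → ℝ → ℝ → ℝ) (M₀ : ℝ → ℝ → ℝ)
    (hΛnn : ∀ t x y, 0 ≤ Λ t x y)
    (hΛint : ∀ x ∈ Set.Ioo a b, ∀ y ∈ Set.Ioo a b, x < y →
        Integrable (fun t => Λ t x y) μ)
    (hMmeas : ∀ x y, Measurable (fun t => M t x y))
    (hMmean : ∀ t, ∀ x ∈ Set.Ioo a b, ∀ y ∈ Set.Ioo a b, x < y →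
        M t x y ∈ Set.Icc x y)
    (hM₀strict : ∀ x ∈ Set.Ioo a b, ∀ y ∈ Set.Ioo a b, x < y →
        M₀ x y ∈ Set.Ioo x y)
    (hposmeas : ∀ x ∈ Set.Ioo a b, ∀ y ∈ Set.Ioo a b, x < y →
        0 < μ {t | 0 < Λ t x y ∧ M t x y ≠ M₀ x y})
    (hint₀ : ∀ x ∈ Set.Ioo a b, ∀ y ∈ Set.Ioo a b, x < y →
        Integrable (fun t => Λ t x y * ω₀ (M t x y)) μ)
    (hint₁ : ∀ x ∈ Set.Ioo a b, ∀ y ∈ Set.Ioo a b, x < y →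
        Integrable (fun t => Λ t x y * ω₁ (M t x y)) μ)
    (hrep₀ : ∀ x ∈ Set.Ioo a b, ∀ y ∈ Set.Ioo a b, x < y →
        ω₀ (M₀ x y) = ∫ t, Λ t x y * ω₀ (M t x y) ∂μ)
    (hrep₁ : ∀ x ∈ Set.Ioo a b, ∀ y ∈ Set.Ioo a b, x < y →
        ω₁ (M₀ x y) = ∫ t, Λ t x y * ω₁ (M t x y) ∂μ)
    -- f : locally upper bounded, Borel measurable, hemi-integrable along the means
    (f : ℝ → ℝ)
    (hfint : ∀ x ∈ Set.Ioo a b, ∀ y ∈ Set.Ioo a b, x < y →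
        Integrable (fun t => Λ t x y * f (M t x y)) μ)
    -- the error function and its regularity
    (eps : ℝ → ℝ → ℝ → ℝ)
    (hepsreg : ∀ x ∈ Set.Ioo a b, ∀ y ∈ Set.Ioo a b, ∀ u, x < u → u < y →
        (∃ C, ∀ v ∈ Set.Icc x u, ∀ w ∈ Set.Icc u y, |eps v w u| ≤ C) ∧
        Measurable (fun vw : ℝ × ℝ => eps vw.1 vw.2 u))
    -- approximate (ω₀,ω₁)-convexity
    (hconv : ∀ x ∈ Set.Ioo a b, ∀ y ∈ Set.Ioo a b, x < y → ∀ u ∈ Set.Icc x y,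
        f u ≤ (ω₀ u * ω₁ y - ω₀ y * ω₁ u) / (ω₀ x * ω₁ y - ω₀ y * ω₁ x) * f x +
          (ω₀ x * ω₁ u - ω₀ u * ω₁ x) / (ω₀ x * ω₁ y - ω₀ y * ω₁ x) * f y +
          eps x y u) :
    ∀ x ∈ Set.Ioo a b, ∀ y ∈ Set.Ioo a b, x < y →
      f (M₀ x y) ≤ (∫ t, Λ t x y * f (M t x y) ∂μ) +
        (∫ t' in {t | 0 < Λ t x y ∧ M t x y < M₀ x y},
            ∫ t'' in {t | 0 < Λ t x y ∧ M₀ x y ≤ M t x y},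
              Λ t' x y * Λ t'' x y *
                (ω₀ (M t' x y) * ω₁ (M t'' x y) - ω₀ (M t'' x y) * ω₁ (M t' x y)) *
                eps (M t' x y) (M t'' x y) (M₀ x y) ∂μ ∂μ) /
        (∫ t' in {t | 0 < Λ t x y ∧ M t x y < M₀ x y},
            ∫ t'' in {t | 0 < Λ t x y ∧ M₀ x y ≤ M t x y},
              Λ t' x y * Λ t'' x y *
                (ω₀ (M t' x y) * ω₁ (M t'' x y) - ω₀ (M t'' x y) * ω₁ (M t' x y)) ∂μ ∂μ) := by
  intro x hx y hy hxy
  have hsub : Set.Icc x y ⊆ Set.Ioo a b := Set.Icc_subset_Ioo hx.1 hy.2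
  have hc := hM₀strict x hx y hy hxy
  have hΛ : ∀ t, 0 ≤ Λ t x y := fun t => hΛnn t x y
  have hΛm := (hΛint x hx y hy hxy).aemeasurable
  have := isFiniteMeasure_withDensity_ofReal (hΛint x hx y hy hxy).hasFiniteIntegral
  obtain ⟨he_bdd, he⟩ := hepsreg x hx y hy _ hc.1 hc.2
  have key := approx_lower_hermite_hadamard_of_sFinite (I := Set.Icc x y)
    (e := fun u v => eps u v (M₀ x y)) (hMmeas x y) (hMmean · x hx y hy hxy)
    (Set.Ioo_subset_Icc_self hc) (fun u hu v hv => hcheb u (hsub hu) v (hsub hv))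
    ((integrable_withDensity_ofReal_iff hΛ hΛm).2 (hint₀ x hx y hy hxy))
    ((integrable_withDensity_ofReal_iff hΛ hΛm).2 (hint₁ x hx y hy hxy))
    ((integrable_withDensity_ofReal_iff hΛ hΛm).2 (hfint x hx y hy hxy))
    ((hrep₀ x hx y hy hxy).trans (integral_withDensity_ofReal hΛ hΛm _).symm)
    ((hrep₁ x hx y hy hxy).trans (integral_withDensity_ofReal hΛ hΛm _).symm)
    ((withDensity_ofReal_pos_iff hΛm).2 (hposmeas x hx y hy hxy)) he
    (he_bdd.imp fun C hC u hu v hv huc hcv => hC u ⟨hu.1, huc.le⟩ v ⟨hcv, hv.2⟩)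
    (fun u hu v hv huc hcv => mul_le_of_le_div_mul_add_div_mul
      (hcheb u (hsub hu) v (hsub hv) (huc.trans_le hcv))
      (hconv u (hsub hu) v (hsub hv) (huc.trans_le hcv) _ ⟨huc.le, hcv⟩))
  have hS' : MeasurableSet {t | M t x y < M₀ x y} := measurableSet_lt (hMmeas x y) measurable_const
  have hS'' : MeasurableSet {t | M₀ x y ≤ M t x y} := measurableSet_le measurable_const (hMmeas x y)
  rw [integral_withDensity_ofReal hΛ hΛm,
    setIntegral_setIntegral_withDensity_ofReal hΛ hΛm hS' hS'',
    setIntegral_setIntegral_withDensity_ofReal hΛ hΛm hS' hS''] at key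
  simpa only [chebyshevDet, mul_assoc] using key

/-- Theorem 3: approximate lower Hermite–Hadamard inequality for
approximate `(ω₀,ω₁)`-convexity: under (A1)–(A4), a locally upper bounded Borel
measurable approximate `(ω₀,ω₁)`-convex function `f` satisfies
`f(M₀(x,y)) ≤ ∫_T Λ(t,x,y) f(M(t,x,y)) dμ(t) + E(x,y)`. -/
theorem approx_lower_hermite_hadamard
    (a b : ℝ) (hab : a < b)
    (ω₀ ω₁ : ℝ → ℝ)
    (hc₀ : ContinuousOn ω₀ (Set.Ioo a b)) (hc₁ : ContinuousOn ω₁ (Set.Ioo a b))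
    (hω₀pos : ∀ z ∈ Set.Ioo a b, 0 < ω₀ z)
    (hcheb : ∀ u ∈ Set.Ioo a b, ∀ v ∈ Set.Ioo a b, u < v →
        0 < ω₀ u * ω₁ v - ω₀ v * ω₁ u)
    {T : Type*} [MeasurableSpace T] (μ : Measure T)
    (Λ M : T → ℝ → ℝ → ℝ) (M₀ : ℝ → ℝ → ℝ)
    (hΛnn : ∀ t x y, 0 ≤ Λ t x y)
    (hΛint : ∀ x ∈ Set.Ioo a b, ∀ y ∈ Set.Ioo a b, x < y →
        Integrable (fun t => Λ t x y) μ)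
    (hMmeas : ∀ x y, Measurable (fun t => M t x y))
    (hMmean : ∀ t, ∀ x ∈ Set.Ioo a b, ∀ y ∈ Set.Ioo a b, x < y →
        M t x y ∈ Set.Icc x y)
    (hM₀strict : ∀ x ∈ Set.Ioo a b, ∀ y ∈ Set.Ioo a b, x < y →
        M₀ x y ∈ Set.Ioo x y)
    (hposmeas : ∀ x ∈ Set.Ioo a b, ∀ y ∈ Set.Ioo a b, x < y →
        0 < μ {t | 0 < Λ t x y ∧ M t x y ≠ M₀ x y})
    (hint₀ : ∀ x ∈ Set.Ioo a b, ∀ y ∈ Set.Ioo a b, x < y →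
        Integrable (fun t => Λ t x y * ω₀ (M t x y)) μ)
    (hint₁ : ∀ x ∈ Set.Ioo a b, ∀ y ∈ Set.Ioo a b, x < y →
        Integrable (fun t => Λ t x y * ω₁ (M t x y)) μ)
    (hrep₀ : ∀ x ∈ Set.Ioo a b, ∀ y ∈ Set.Ioo a b, x < y →
        ω₀ (M₀ x y) = ∫ t, Λ t x y * ω₀ (M t x y) ∂μ)
    (hrep₁ : ∀ x ∈ Set.Ioo a b, ∀ y ∈ Set.Ioo a b, x < y →
        ω₁ (M₀ x y) = ∫ t, Λ t x y * ω₁ (M t x y) ∂μ)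
    -- f : locally upper bounded, Borel measurable, hemi-integrable along the means
    (f : ℝ → ℝ) (hfmeas : Measurable f)
    (hfbdd : ∀ x ∈ Set.Ioo a b, ∀ y ∈ Set.Ioo a b, x < y →
        BddAbove (f '' Set.Icc x y))
    (hfint : ∀ x ∈ Set.Ioo a b, ∀ y ∈ Set.Ioo a b, x < y →
        Integrable (fun t => Λ t x y * f (M t x y)) μ)
    -- the error function and its regularity
    (eps : ℝ → ℝ → ℝ → ℝ)
    (hepsreg : ∀ x ∈ Set.Ioo a b, ∀ y ∈ Set.Ioo a b, ∀ u, x < u → u < y →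
        (∃ C, ∀ v ∈ Set.Icc x u, ∀ w ∈ Set.Icc u y, |eps v w u| ≤ C) ∧
        Measurable (fun vw : ℝ × ℝ => eps vw.1 vw.2 u))
    -- approximate (ω₀,ω₁)-convexity
    (hconv : ∀ x ∈ Set.Ioo a b, ∀ y ∈ Set.Ioo a b, x < y → ∀ u ∈ Set.Icc x y,
        f u ≤ (ω₀ u * ω₁ y - ω₀ y * ω₁ u) / (ω₀ x * ω₁ y - ω₀ y * ω₁ x) * f x +
          (ω₀ x * ω₁ u - ω₀ u * ω₁ x) / (ω₀ x * ω₁ y - ω₀ y * ω₁ x) * f y +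
          eps x y u) :
    ∀ x ∈ Set.Ioo a b, ∀ y ∈ Set.Ioo a b, x < y →
      f (M₀ x y) ≤ (∫ t, Λ t x y * f (M t x y) ∂μ) +
        (∫ t' in {t | 0 < Λ t x y ∧ M t x y < M₀ x y},
            ∫ t'' in {t | 0 < Λ t x y ∧ M₀ x y ≤ M t x y},
              Λ t' x y * Λ t'' x y *
                (ω₀ (M t' x y) * ω₁ (M t'' x y) - ω₀ (M t'' x y) * ω₁ (M t' x y)) *
                eps (M t' x y) (M t'' x y) (M₀ x y) ∂μ ∂μ) /
        (∫ t' in {t | 0 < Λ t x y ∧ M t x y < M₀ x y},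
            ∫ t'' in {t | 0 < Λ t x y ∧ M₀ x y ≤ M t x y},
              Λ t' x y * Λ t'' x y *
                (ω₀ (M t' x y) * ω₁ (M t'' x y) - ω₀ (M t'' x y) * ω₁ (M t' x y)) ∂μ ∂μ) :=
  approx_lower_hermite_hadamard_general a b ω₀ ω₁ hcheb μ Λ M M₀ hΛnn hΛint hMmeas hMmean hM₀strict
    hposmeas hint₀ hint₁ hrep₀ hrep₁ f hfint eps hepsreg hconv
end

section
/- (Upper Hermite–Hadamard for (ω₀,ω₁)-convex functions.) Let (ω₀,ω₁) be a positive Chebyshev system on an open interval I and ρ : I → ℝ a positive integrable function. Define c₁(x,y) := [ (∫ₓʸ ω₀ρ)·ω₁(y) − (∫ₓʸ ω₁ρ)·ω₀(y) ] / Ω(x,y) and c₂(x,y) := [ω₀(x)(∫ₓʸ ω₁ρ) − ω₁(x)(∫ₓʸ ω₀ρ)]/Ω(x,y). If f : I → ℝ is (ω₀,ω₁)-convex, then for all x < y in I, ∫ₓʸ fρ ≤ c₁(x,y)f(x) + c₂(x,y)f(y). -/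
open MeasureTheory intervalIntegral

/-- upper Hermite–Hadamard for `(ω₀,ω₁)`-convex functions:
`∫ₓʸ fρ ≤ c₁(x,y)f(x) + c₂(x,y)f(y)` with
`c₁(x,y) = [(∫ₓʸω₀ρ)ω₁(y) − (∫ₓʸω₁ρ)ω₀(y)]/Ω(x,y)` and
`c₂(x,y) = [ω₀(x)(∫ₓʸω₁ρ) − ω₁(x)(∫ₓʸω₀ρ)]/Ω(x,y)`. -/
theorem upper_hermite_hadamard_chebyshev
    (a b : ℝ) (hab : a < b)
    (ω₀ ω₁ : ℝ → ℝ)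
    (hc₀ : ContinuousOn ω₀ (Set.Ioo a b)) (hc₁ : ContinuousOn ω₁ (Set.Ioo a b))
    (hω₀pos : ∀ z ∈ Set.Ioo a b, 0 < ω₀ z)
    (hcheb : ∀ u ∈ Set.Ioo a b, ∀ v ∈ Set.Ioo a b, u < v →
        0 < ω₀ u * ω₁ v - ω₀ v * ω₁ u)
    (ρ : ℝ → ℝ) (hρpos : ∀ z ∈ Set.Ioo a b, 0 < ρ z)
    (hρint : ∀ x ∈ Set.Ioo a b, ∀ y ∈ Set.Ioo a b, IntervalIntegrable ρ volume x y)
    (f : ℝ → ℝ)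
    (hfρint : ∀ x ∈ Set.Ioo a b, ∀ y ∈ Set.Ioo a b,
        IntervalIntegrable (fun u => f u * ρ u) volume x y)
    (hconv : ∀ x ∈ Set.Ioo a b, ∀ u ∈ Set.Ioo a b, ∀ y ∈ Set.Ioo a b,
        x < u → u < y →
        f u ≤ (ω₀ u * ω₁ y - ω₀ y * ω₁ u) / (ω₀ x * ω₁ y - ω₀ y * ω₁ x) * f x +
          (ω₀ x * ω₁ u - ω₀ u * ω₁ x) / (ω₀ x * ω₁ y - ω₀ y * ω₁ x) * f y) :
    ∀ x ∈ Set.Ioo a b, ∀ y ∈ Set.Ioo a b, x < y →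
      (∫ u in x..y, f u * ρ u) ≤
        ((∫ u in x..y, ω₀ u * ρ u) * ω₁ y - (∫ u in x..y, ω₁ u * ρ u) * ω₀ y) /
            (ω₀ x * ω₁ y - ω₀ y * ω₁ x) * f x +
        (ω₀ x * (∫ u in x..y, ω₁ u * ρ u) - ω₁ x * (∫ u in x..y, ω₀ u * ρ u)) /
            (ω₀ x * ω₁ y - ω₀ y * ω₁ x) * f y := by
  intro x hx y hy hxy
  have hΩ : 0 < ω₀ x * ω₁ y - ω₀ y * ω₁ x := hcheb x hx y hy hxy
  set Ω : ℝ := ω₀ x * ω₁ y - ω₀ y * ω₁ x with hΩdef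
  have hsub : Set.uIcc x y ⊆ Set.Ioo a b := by
    rw [Set.uIcc_of_le hxy.le]
    exact fun z hz => ⟨lt_of_lt_of_le hx.1 hz.1, lt_of_le_of_lt hz.2 hy.2⟩
  have hρ : IntervalIntegrable ρ volume x y := hρint x hx y hy
  have h0c : ContinuousOn ω₀ (Set.uIcc x y) := hc₀.mono hsub
  have h1c : ContinuousOn ω₁ (Set.uIcc x y) := hc₁.mono hsub
  have h0int : IntervalIntegrable (fun u => ω₀ u * ρ u) volume x y :=
    hρ.continuousOn_mul h0c
  have h1int : IntervalIntegrable (fun u => ω₁ u * ρ u) volume x y :=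
    hρ.continuousOn_mul h1c
  set g : ℝ → ℝ := fun u =>
    ((ω₀ u * ω₁ y - ω₀ y * ω₁ u) / Ω * f x +
      (ω₀ x * ω₁ u - ω₀ u * ω₁ x) / Ω * f y) * ρ u with hgdef
  have hgint : IntervalIntegrable g volume x y := by
    apply hρ.continuousOn_mul
    apply ContinuousOn.add
    · exact ((((h0c.mul continuousOn_const).sub
        (continuousOn_const.mul h1c)).div_const _).mul continuousOn_const)
    · exact ((((continuousOn_const.mul h1c).sub
        (h0c.mul continuousOn_const)).div_const _).mul continuousOn_const)
  have hmono : (∫ u in x..y, f u * ρ u) ≤ ∫ u in x..y, g u := by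
    apply intervalIntegral.integral_mono_on hxy.le (hfρint x hx y hy) hgint
    intro u hu
    have huab : u ∈ Set.Ioo a b :=
      ⟨lt_of_lt_of_le hx.1 hu.1, lt_of_le_of_lt hu.2 hy.2⟩
    rcases eq_or_lt_of_le hu.1 with h1 | h1
    · subst h1
      apply le_of_eq
      simp only [hgdef]
      rw [show ω₀ x * ω₁ x - ω₀ x * ω₁ x = 0 by ring]
      rw [show ω₀ x * ω₁ y - ω₀ y * ω₁ x = Ω by rw [hΩdef]]
      rw [div_self hΩ.ne']
      ring
    rcases eq_or_lt_of_le hu.2 with h2 | h2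
    · subst h2
      apply le_of_eq
      simp only [hgdef]
      rw [show ω₀ u * ω₁ u - ω₀ u * ω₁ u = 0 by ring]
      rw [show ω₀ x * ω₁ u - ω₀ u * ω₁ x = Ω by rw [hΩdef]]
      rw [div_self hΩ.ne']
      ring
    · exact mul_le_mul_of_nonneg_right
        (hconv x hx u huab y hy h1 h2) (hρpos u huab).le
  refine hmono.trans (le_of_eq ?_)
  have hrw : ∀ u : ℝ, g u =
      (ω₁ y * f x - ω₁ x * f y) / Ω * (ω₀ u * ρ u) +
      (ω₀ x * f y - ω₀ y * f x) / Ω * (ω₁ u * ρ u) := by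
    intro u
    simp only [hgdef]
    field_simp
    ring
  calc (∫ u in x..y, g u)
      = ∫ u in x..y, ((ω₁ y * f x - ω₁ x * f y) / Ω * (ω₀ u * ρ u) +
          (ω₀ x * f y - ω₀ y * f x) / Ω * (ω₁ u * ρ u)) := by
        exact intervalIntegral.integral_congr (fun u _ => hrw u)
    _ = (ω₁ y * f x - ω₁ x * f y) / Ω * (∫ u in x..y, ω₀ u * ρ u) +
        (ω₀ x * f y - ω₀ y * f x) / Ω * (∫ u in x..y, ω₁ u * ρ u) := by
        rw [intervalIntegral.integral_add (h0int.const_mul _) (h1int.const_mul _),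
          intervalIntegral.integral_const_mul, intervalIntegral.integral_const_mul]
    _ = ((∫ u in x..y, ω₀ u * ρ u) * ω₁ y - (∫ u in x..y, ω₁ u * ρ u) * ω₀ y) / Ω * f x +
        (ω₀ x * (∫ u in x..y, ω₁ u * ρ u) - ω₁ x * (∫ u in x..y, ω₀ u * ρ u)) / Ω * f y := by
        field_simp
        ring
end

section
/- (Approximate lower Hermite–Hadamard with general probability measure.) Let D be a convex subset of a real linear space X, 𝒜 a σ-algebra containing the Borel subsets of [0,1], and μ a probability measure on ([0,1],𝒜) whose support is not a singleton. Let μ₁ := ∫_{[0,1]} t dμ(t) and S(μ) := μ([0,μ₁])·∫_{(μ₁,1]} t dμ(t) − μ((μ₁,1])·∫_{[0,μ₁]} t dμ(t). Assume f : D → ℝ is hemi-μ-integrable and satisfies f((1−t)x+ty) ≤ (1−t)f(x) + t f(y) + η_{x,y}(t) for all x ≠ y in D and t ∈ [0,1], where I(x,y) := ∫_{(μ₁,1]}∫_{[0,μ₁]} (t''−t')·η_{(1−t')x+t'y, (1−t'')x+t''y}((μ₁−t')/(t''−t')) dμ(t') dμ(t'') exists in [−∞,∞]. Then f((1−μ₁)x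 + μ₁y) ≤ ∫_{[0,1]} f((1−t)x+ty) dμ(t) + I(x,y)/S(μ) for all x ≠ y in D. -/
/-!
For `t' ≤ μ₁ < t''` the point with parameter `μ₁` on the segment `[x, y]` is a convex
combination of the points with parameters `t'` and `t''`, with weights proportional to
`t'' - μ₁` and `μ₁ - t'`. Multiplying approximate convexity at these two points by `t'' - t'` and
integrating over `t' ∈ [0, μ₁]` and `t'' ∈ (μ₁, 1]` gives
`S f(x_{μ₁}) ≤ S ∫ f(x_t) dμ + I(x, y)`, because
`∫_{[0,μ₁]} (μ₁ - t) dμ = ∫_{(μ₁,1]} (t - μ₁) dμ = S`. These two integrals add up to the mean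
absolute deviation `∫ |t - μ₁| dμ`, so `S > 0` as soon as `μ` is not a Dirac mass.
-/

open MeasureTheory Set

section ApproxConvex

variable {X : Type*} [AddCommGroup X] [Module ℝ X]

def ApproxConvexOn (D : Set X) (f : X → ℝ) (η : X → X → ℝ → ℝ) : Prop :=
  ∀ x ∈ D, ∀ y ∈ D, x ≠ y → ∀ t ∈ Icc (0 : ℝ) 1,
    f ((1 - t) • x + t • y) ≤ (1 - t) * f x + t * f y + η x y t

theorem segment_param_injective {x y : X} (hxy : x ≠ y) :
    Function.Injective fun t : ℝ => (1 - t) • x + t • y := by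
  intro t t' h
  have h' : t • (y - x) = t' • (y - x) := by
    simp only at h
    linear_combination (norm := module) h
  exact smul_left_injective ℝ (sub_ne_zero.mpr hxy.symm) h'

theorem ApproxConvexOn.mul_le_of_mem_Icc_of_mem_Ioc {D : Set X} {f : X → ℝ}
    {η : X → X → ℝ → ℝ} (hf : ApproxConvexOn D f η) (hD : Convex ℝ D)
    {x y : X} (hx : x ∈ D) (hy : y ∈ D) (hxy : x ≠ y) {m t' t'' : ℝ}
    (ht' : t' ∈ Icc 0 m) (ht'' : t'' ∈ Ioc m 1) :
    (t'' - t') * f ((1 - m) • x + m • y) ≤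
      (t'' - m) * f ((1 - t') • x + t' • y) + (m - t') * f ((1 - t'') • x + t'' • y) +
        (t'' - t') * η ((1 - t') • x + t' • y) ((1 - t'') • x + t'' • y)
          ((m - t') / (t'' - t')) := by
  obtain ⟨h0t', ht'm⟩ := ht'
  obtain ⟨hmt'', ht''1⟩ := ht''
  have hd : 0 < t'' - t' := by linarith
  set s := (m - t') / (t'' - t')
  have hs : s * (t'' - t') = m - t' := div_mul_cancel₀ _ hd.ne'
  have hs0 : 0 ≤ s := div_nonneg (by linarith) hd.le
  have hs1 : s ≤ 1 := (div_le_one hd).mpr (by linarith)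
  have hp' : (1 - t') • x + t' • y ∈ D := hD hx hy (by linarith) h0t' (by ring)
  have hp'' : (1 - t'') • x + t'' • y ∈ D := hD hx hy (by linarith) (by linarith) (by ring)
  have hne := (segment_param_injective hxy).ne (by linarith : t' < t'').ne
  have hm : (1 - s) • ((1 - t') • x + t' • y) + s • ((1 - t'') • x + t'' • y) =
      (1 - m) • x + m • y := by
    linear_combination (norm := module) hs • (y - x)
  have h := hf _ hp' _ hp'' hne s ⟨hs0, hs1⟩
  rw [hm] at h
  calc (t'' - t') * f ((1 - m) • x + m • y)
      ≤ (t'' - t') * ((1 - s) * f ((1 - t') • x + t' • y) +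
          s * f ((1 - t'') • x + t'' • y) +
          η ((1 - t') • x + t' • y) ((1 - t'') • x + t'' • y) s) :=
        mul_le_mul_of_nonneg_left h hd.le
    _ = _ := by
        linear_combination (f ((1 - t'') • x + t'' • y) - f ((1 - t') • x + t' • y)) * hs

end ApproxConvex

section Integration

variable {α : Type*} [MeasurableSpace α] {μ : Measure α} [IsFiniteMeasure μ] {A B : Set α}

theorem setIntegral_weighted_le (hA : MeasurableSet A) {w g e : α → ℝ} {p c d q : ℝ}
    (hw : IntegrableOn w A μ) (hg : IntegrableOn g A μ) (he : IntegrableOn e A μ)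
    (h : ∀ r ∈ A, p * c + w r * d ≤ p * g r + w r * q + e r) :
    p * μ.real A * c + (∫ r in A, w r ∂μ) * d ≤
      p * (∫ r in A, g r ∂μ) + (∫ r in A, w r ∂μ) * q + ∫ r in A, e r ∂μ := by
  have hgw : IntegrableOn (fun r => p * g r + w r * q) A μ :=
    (hg.const_mul p).add (hw.mul_const q)
  have hmono : ∫ r in A, (p * c + w r * d) ∂μ ≤ ∫ r in A, (p * g r + w r * q + e r) ∂μ :=
    setIntegral_mono_on ((integrable_const _).add (hw.mul_const d)) (hgw.add he) hA h
  rw [integral_add (integrable_const _) (hw.mul_const d), integral_add hgw he,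
    integral_add (hg.const_mul p) (hw.mul_const q), setIntegral_const, integral_const_mul,
    integral_mul_const, integral_mul_const, smul_eq_mul] at hmono
  linarith

theorem setIntegral_setIntegral_weighted_le (hA : MeasurableSet A) (hB : MeasurableSet B)
    {w₁ w₂ g : α → ℝ} {E : α → α → ℝ} {c : ℝ}
    (hw₁ : IntegrableOn w₁ A μ) (hw₂ : IntegrableOn w₂ B μ)
    (hgA : IntegrableOn g A μ) (hgB : IntegrableOn g B μ)
    (hE : ∀ s ∈ B, IntegrableOn (E s) A μ)
    (hE' : IntegrableOn (fun s => ∫ r in A, E s r ∂μ) B μ)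
    (h : ∀ s ∈ B, ∀ r ∈ A, (w₂ s + w₁ r) * c ≤ w₂ s * g r + w₁ r * g s + E s r) :
    (μ.real A * ∫ s in B, w₂ s ∂μ + μ.real B * ∫ r in A, w₁ r ∂μ) * c ≤
      (∫ s in B, w₂ s ∂μ) * (∫ r in A, g r ∂μ) + (∫ r in A, w₁ r ∂μ) * (∫ s in B, g s ∂μ) +
        ∫ s in B, ∫ r in A, E s r ∂μ ∂μ := by
  have inner : ∀ s ∈ B, (∫ r in A, w₁ r ∂μ) * c + w₂ s * (μ.real A * c) ≤
      (∫ r in A, w₁ r ∂μ) * g s + w₂ s * (∫ r in A, g r ∂μ) + ∫ r in A, E s r ∂μ := by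
    intro s hs
    have := setIntegral_weighted_le hA hw₁ hgA (hE s hs) (p := w₂ s) (c := c) (d := c)
      (q := g s) fun r hr => by linarith [h s hs r hr]
    linarith
  have outer := setIntegral_weighted_le hB hw₂ hgB hE' inner
  linarith

end Integration

section Partition

variable {α : Type*} [MeasurableSpace α] {μ : Measure α} {A B : Set α}

theorem integral_eq_setIntegral_add_of_disjoint (hAB : Disjoint A B) (hB : MeasurableSet B)
    (hfull : μ (A ∪ B)ᶜ = 0) {g : α → ℝ} (hg : Integrable g μ) :
    ∫ t, g t ∂μ = ∫ t in A, g t ∂μ + ∫ t in B, g t ∂μ := by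
  rw [← setIntegral_union hAB hB hg.integrableOn hg.integrableOn,
    Measure.restrict_eq_self_of_ae_mem (s := A ∪ B) (mem_ae_iff.mpr hfull)]

theorem measureReal_add_measureReal_of_disjoint [IsProbabilityMeasure μ] (hAB : Disjoint A B)
    (hA : MeasurableSet A) (hB : MeasurableSet B) (hfull : μ (A ∪ B)ᶜ = 0) :
    μ.real A + μ.real B = 1 := by
  rw [← measureReal_union hAB hB, measureReal_def,
    (prob_compl_eq_zero_iff (hA.union hB)).mp hfull, ENNReal.toReal_one]

end Partition

section Mean

variable {μ : Measure ℝ} [IsProbabilityMeasure μ] {A B : Set ℝ}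

theorem setIntegral_mean_sub_eq (hid : Integrable (fun t => t) μ) (hAB : Disjoint A B)
    (hA : MeasurableSet A) (hB : MeasurableSet B) (hfull : μ (A ∪ B)ᶜ = 0) :
    ∫ t in A, ((∫ u, u ∂μ) - t) ∂μ =
      μ.real A * (∫ t in B, t ∂μ) - μ.real B * ∫ t in A, t ∂μ := by
  have hmass := measureReal_add_measureReal_of_disjoint hAB hA hB hfull
  rw [integral_sub (integrable_const _) hid.integrableOn, setIntegral_const, smul_eq_mul,
    integral_eq_setIntegral_add_of_disjoint hAB hB hfull hid]
  linear_combination (∫ t in A, t ∂μ) * hmass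

theorem setIntegral_sub_mean_eq (hid : Integrable (fun t => t) μ) (hAB : Disjoint A B)
    (hA : MeasurableSet A) (hB : MeasurableSet B) (hfull : μ (A ∪ B)ᶜ = 0) :
    ∫ t in B, (t - ∫ u, u ∂μ) ∂μ =
      μ.real A * (∫ t in B, t ∂μ) - μ.real B * ∫ t in A, t ∂μ := by
  have hmass := measureReal_add_measureReal_of_disjoint hAB hA hB hfull
  rw [integral_sub hid.integrableOn (integrable_const _), setIntegral_const, smul_eq_mul,
    integral_eq_setIntegral_add_of_disjoint hAB hB hfull hid]
  linear_combination -(∫ t in B, t ∂μ) * hmass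

end Mean

section UnitInterval

variable {μ : Measure ℝ} [IsProbabilityMeasure μ]

theorem integrable_id_of_measure_compl_Icc (hμc : μ (Icc (0 : ℝ) 1)ᶜ = 0) :
    Integrable (fun t => t) μ :=
  Integrable.of_mem_Icc 0 1 aemeasurable_id (mem_ae_iff.mpr hμc)

theorem integral_id_mem_Icc_of_measure_compl_Icc (hμc : μ (Icc (0 : ℝ) 1)ᶜ = 0) :
    ∫ t, t ∂μ ∈ Icc (0 : ℝ) 1 := by
  have hmem : ∀ᵐ t ∂μ, t ∈ Icc (0 : ℝ) 1 := mem_ae_iff.mpr hμc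
  have hid := integrable_id_of_measure_compl_Icc hμc
  refine ⟨integral_nonneg_of_ae (hmem.mono fun _ ht => ht.1), ?_⟩
  calc ∫ t, t ∂μ ≤ ∫ _, (1 : ℝ) ∂μ :=
        integral_mono_ae hid (integrable_const 1) (hmem.mono fun _ ht => ht.2)
    _ = 1 := by simp

theorem integral_abs_sub_pos {c : ℝ} (hid : Integrable (fun t => t) μ) (hc : μ {c}ᶜ ≠ 0) :
    0 < ∫ t, |t - c| ∂μ := by
  have hsupp : Function.support (fun t => |t - c|) = {c}ᶜ := by ext; simp [sub_eq_zero]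
  have hint : Integrable (fun t => |t - c|) μ := (hid.sub (integrable_const c)).abs
  rw [integral_pos_iff_support_of_nonneg (fun _ => abs_nonneg _) hint, hsupp]
  exact pos_iff_ne_zero.mpr hc

theorem setIntegral_mean_sub_pos (hμc : μ (Icc (0 : ℝ) 1)ᶜ = 0)
    (hsupp : ¬ ∃ c : ℝ, μ ({c}ᶜ) = 0) :
    0 < ∫ t in Icc 0 (∫ u, u ∂μ), ((∫ u, u ∂μ) - t) ∂μ := by
  set m := ∫ u, u ∂μ
  have hid := integrable_id_of_measure_compl_Icc hμc
  obtain ⟨hm0, hm1⟩ := integral_id_mem_Icc_of_measure_compl_Icc hμc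
  have hAB : Disjoint (Icc 0 m) (Ioc m 1) :=
    (Iic_disjoint_Ioc le_rfl).mono_left Icc_subset_Iic_self
  have hfull : μ (Icc 0 m ∪ Ioc m 1)ᶜ = 0 := by rwa [Icc_union_Ioc_eq_Icc hm0 hm1]
  have hhalves : ∫ t in Ioc m 1, (t - m) ∂μ = ∫ t in Icc 0 m, (m - t) ∂μ := by
    rw [setIntegral_sub_mean_eq hid hAB measurableSet_Icc measurableSet_Ioc hfull,
      setIntegral_mean_sub_eq hid hAB measurableSet_Icc measurableSet_Ioc hfull]
  have hdev : ∫ t, |t - m| ∂μ = ∫ t in Icc 0 m, (m - t) ∂μ + ∫ t in Ioc m 1, (t - m) ∂μ := by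
    have hint : Integrable (fun t => |t - m|) μ := (hid.sub (integrable_const m)).abs
    rw [integral_eq_setIntegral_add_of_disjoint hAB measurableSet_Ioc hfull hint,
      setIntegral_congr_fun measurableSet_Icc fun t ht =>
        (abs_sub_comm t m).trans (abs_of_nonneg (sub_nonneg.mpr ht.2)),
      setIntegral_congr_fun measurableSet_Ioc fun t ht => abs_of_pos (sub_pos.mpr ht.1)]
  have hpos := integral_abs_sub_pos hid fun h => hsupp ⟨m, h⟩
  linarith

end UnitInterval

/-- Theorem 4: approximate lower Hermite–Hadamard with a general
probability measure on `[0,1]`: if `f` is hemi-`μ`-integrable and approximately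
convex with error `η`, then
`f((1−μ₁)x + μ₁y) ≤ ∫ f((1−t)x+ty) dμ(t) + I(x,y)/S(μ)`. -/
theorem approx_lower_hh_general_measure
    {X : Type*} [AddCommGroup X] [Module ℝ X]
    (D : Set X) (hD : Convex ℝ D)
    (μ : Measure ℝ) [IsProbabilityMeasure μ]
    (hμc : μ (Set.Icc (0:ℝ) 1)ᶜ = 0)
    -- the support of μ is not a singleton
    (hsupp : ¬ ∃ c : ℝ, μ ({c}ᶜ) = 0)
    (μ₁ : ℝ) (hμ₁ : μ₁ = ∫ t, t ∂μ)
    (S : ℝ)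
    (hS : S = (μ (Set.Icc 0 μ₁)).toReal * (∫ t in Set.Ioc μ₁ 1, t ∂μ) -
        (μ (Set.Ioc μ₁ 1)).toReal * (∫ t in Set.Icc 0 μ₁, t ∂μ))
    (f : X → ℝ) (η : X → X → ℝ → ℝ)
    -- hemi-μ-integrability of f
    (hf : ∀ x ∈ D, ∀ y ∈ D, Integrable (fun t => f ((1 - t) • x + t • y)) μ)
    -- approximate convexity
    (hconv : ∀ x ∈ D, ∀ y ∈ D, x ≠ y → ∀ t ∈ Set.Icc (0:ℝ) 1,
        f ((1 - t) • x + t • y) ≤ (1 - t) * f x + t * f y + η x y t)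
    -- existence (integrability) of the double error integral I(x,y)
    (hη₁ : ∀ x ∈ D, ∀ y ∈ D, x ≠ y → ∀ t'' ∈ Set.Ioc μ₁ 1,
        IntegrableOn
          (fun t' => (t'' - t') *
            η ((1 - t') • x + t' • y) ((1 - t'') • x + t'' • y)
              ((μ₁ - t') / (t'' - t')))
          (Set.Icc 0 μ₁) μ)
    (hη₂ : ∀ x ∈ D, ∀ y ∈ D, x ≠ y →
        IntegrableOn
          (fun t'' => ∫ t' in Set.Icc 0 μ₁, (t'' - t') *
            η ((1 - t') • x + t' • y) ((1 - t'') • x + t'' • y)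
              ((μ₁ - t') / (t'' - t')) ∂μ)
          (Set.Ioc μ₁ 1) μ) :
    ∀ x ∈ D, ∀ y ∈ D, x ≠ y →
      f ((1 - μ₁) • x + μ₁ • y) ≤
        (∫ t, f ((1 - t) • x + t • y) ∂μ) +
        (∫ t'' in Set.Ioc μ₁ 1, ∫ t' in Set.Icc 0 μ₁, (t'' - t') *
            η ((1 - t') • x + t' • y) ((1 - t'') • x + t'' • y)
              ((μ₁ - t') / (t'' - t')) ∂μ ∂μ) / S := by
  intro x hx y hy hxy
  have happrox : ApproxConvexOn D f η := hconv
  have hid := integrable_id_of_measure_compl_Icc hμc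
  obtain ⟨hm0, hm1⟩ : μ₁ ∈ Icc 0 1 := hμ₁ ▸ integral_id_mem_Icc_of_measure_compl_Icc hμc
  have hAB : Disjoint (Icc 0 μ₁) (Ioc μ₁ 1) :=
    (Iic_disjoint_Ioc le_rfl).mono_left Icc_subset_Iic_self
  have hfull : μ (Icc 0 μ₁ ∪ Ioc μ₁ 1)ᶜ = 0 := by rwa [Icc_union_Ioc_eq_Icc hm0 hm1]
  have hSA : ∫ t in Icc 0 μ₁, (μ₁ - t) ∂μ = S := by
    rw [hS, ← measureReal_def, ← measureReal_def]
    subst hμ₁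
    exact setIntegral_mean_sub_eq hid hAB measurableSet_Icc measurableSet_Ioc hfull
  have hSB : ∫ t in Ioc μ₁ 1, (t - μ₁) ∂μ = S := by
    rw [hS, ← measureReal_def, ← measureReal_def]
    subst hμ₁
    exact setIntegral_sub_mean_eq hid hAB measurableSet_Icc measurableSet_Ioc hfull
  have hSpos : 0 < S := hSA ▸ hμ₁ ▸ setIntegral_mean_sub_pos hμc hsupp
  have hg := hf x hx y hy
  have key := setIntegral_setIntegral_weighted_le measurableSet_Icc measurableSet_Ioc
    (w₁ := fun t => μ₁ - t) (w₂ := fun t => t - μ₁) (c := f ((1 - μ₁) • x + μ₁ • y))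
    ((integrable_const μ₁).sub hid).integrableOn (hid.sub (integrable_const μ₁)).integrableOn
    hg.integrableOn hg.integrableOn (hη₁ x hx y hy hxy) (hη₂ x hx y hy hxy)
    fun t'' ht'' t' ht' => by
      simpa only [sub_add_sub_cancel] using
        happrox.mul_le_of_mem_Icc_of_mem_Ioc hD hx hy hxy ht' ht''
  rw [hSA, hSB, ← add_mul,
    measureReal_add_measureReal_of_disjoint hAB measurableSet_Icc measurableSet_Ioc hfull,
    one_mul] at key
  rw [integral_eq_setIntegral_add_of_disjoint hAB measurableSet_Ioc hfull hg,
    ← sub_le_iff_le_add', le_div_iff₀ hSpos]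
  linear_combination key
end

section
/- (Approximate lower Hermite–Hadamard for Lebesgue measure.) Let D be a convex subset of a real linear space and f : D → ℝ hemi-Lebesgue integrable, satisfying f((1−t)x+ty) ≤ (1−t)f(x) + t f(y) + η_{x,y}(t) for all x ≠ y in D and t ∈ [0,1], where I(x,y) := ∫_{1/2}^{1} ∫_{0}^{1/2} (t''−t')·η_{(1−t')x+t'y, (1−t'')x+t''y}((1/2−t')/(t''−t')) dt' dt'' exists in [−∞,∞]. Then f((x+y)/2) ≤ ∫₀¹ f((1−t)x+ty) dt + 8·I(x,y) for all x ≠ y in D. -/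
/-!
Fix `x ≠ y` in `D`, write `P t = (1 - t) • x + t • y` and `g t = f (P t)`. For
`t' < 1/2 < t''` the midpoint is the convex combination `(1 - s) • P t' + s • P t''` with
`s = (1/2 - t') / (t'' - t')`, so approximate convexity along the chord `[P t', P t'']`, multiplied
by `t'' - t'`, gives
`(t'' - t') f(P (1/2)) ≤ (t'' - 1/2) g t' + (1/2 - t') g t'' + (t'' - t') η (…) s`.
Integrate over `t' ∈ [0, 1/2]` and then over `t'' ∈ [1/2, 1]`: each of the weights `t'' - t'`,
`t'' - 1/2` and `1/2 - t'` has integral `1/8` over the square, so multiplying by `8` gives the claim.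
-/

open MeasureTheory intervalIntegral Set

section ApproxConvex

variable {X : Type*} [AddCommGroup X] [Module ℝ X]

theorem smul_add_smul_ne_of_ne {x y : X} (hxy : x ≠ y) {a b : ℝ} (hab : a ≠ b) :
    (1 - a) • x + a • y ≠ (1 - b) • x + b • y := by
  simpa only [AffineMap.lineMap_apply_module] using (AffineMap.lineMap_injective ℝ hxy).ne hab

theorem convex_comb_smul_add_smul {x y : X} {a b c : ℝ} (hab : a ≠ b) :
    (1 - (c - a) / (b - a)) • ((1 - a) • x + a • y) +
        ((c - a) / (b - a)) • ((1 - b) • x + b • y) = (1 - c) • x + c • y := by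
  have hs : (c - a) / (b - a) * (b - a) = c - a := div_mul_cancel₀ _ (sub_ne_zero.mpr hab.symm)
  calc _ = (1 - a - (c - a) / (b - a) * (b - a)) • x +
        (a + (c - a) / (b - a) * (b - a)) • y := by module
    _ = (1 - c) • x + c • y := by rw [hs]; module

theorem sub_mul_le_of_approxConvex {D : Set X} (hD : Convex ℝ D) {f : X → ℝ}
    {η : X → X → ℝ → ℝ}
    (hconv : ∀ x ∈ D, ∀ y ∈ D, x ≠ y → ∀ t ∈ Icc (0:ℝ) 1,
        f ((1 - t) • x + t • y) ≤ (1 - t) * f x + t * f y + η x y t)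
    {x y : X} (hx : x ∈ D) (hy : y ∈ D) (hxy : x ≠ y) {a b c : ℝ}
    (ha : 0 ≤ a) (hac : a ≤ c) (hcb : c ≤ b) (hb : b ≤ 1) (hab : a < b) :
    (b - a) * f ((1 - c) • x + c • y) ≤
      (b - c) * f ((1 - a) • x + a • y) + (c - a) * f ((1 - b) • x + b • y) +
        (b - a) * η ((1 - a) • x + a • y) ((1 - b) • x + b • y) ((c - a) / (b - a)) := by
  have hba : 0 < b - a := sub_pos.mpr hab
  set s := (c - a) / (b - a) with hs_def
  have hs : (b - a) * s = c - a := mul_div_cancel₀ _ hba.ne'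
  have hs_mem : s ∈ Icc (0:ℝ) 1 :=
    ⟨div_nonneg (by linarith) hba.le, (div_le_one hba).mpr (by linarith)⟩
  have hPa : (1 - a) • x + a • y ∈ D := hD hx hy (by linarith) ha (by ring)
  have hPb : (1 - b) • x + b • y ∈ D := hD hx hy (by linarith) (by linarith) (by ring)
  have hchord := hconv _ hPa _ hPb (smul_add_smul_ne_of_ne hxy hab.ne) s hs_mem
  rw [hs_def, convex_comb_smul_add_smul hab.ne, ← hs_def] at hchord
  calc (b - a) * f ((1 - c) • x + c • y)
      ≤ (b - a) * ((1 - s) * f ((1 - a) • x + a • y) + s * f ((1 - b) • x + b • y) +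
          η ((1 - a) • x + a • y) ((1 - b) • x + b • y) s) :=
        mul_le_mul_of_nonneg_left hchord hba.le
    _ = _ := by
        linear_combination (f ((1 - b) • x + b • y) - f ((1 - a) • x + a • y)) * hs

end ApproxConvex

section DoubleIntegral

variable {g : ℝ → ℝ} {c : ℝ}

theorem mul_le_of_forall_Ioo_mul_le {φ : ℝ → ℝ} {t'' : ℝ}
    (hg : IntervalIntegrable g volume 0 (1/2)) (hφ : IntervalIntegrable φ volume 0 (1/2))
    (h : ∀ t' ∈ Ioo (0:ℝ) (1/2),
      (t'' - t') * c ≤ (t'' - 1/2) * g t' + (1/2 - t') * g t'' + φ t') :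
    (t'' / 2 - 1/8) * c ≤
      (t'' - 1/2) * (∫ t' in (0:ℝ)..(1/2), g t') + g t'' / 8 +
        ∫ t' in (0:ℝ)..(1/2), φ t' := by
  have hlin : IntervalIntegrable (fun t' => (1/2 - t') * g t'') volume 0 (1/2) :=
    (by fun_prop : Continuous fun t' : ℝ => (1/2 - t') * g t'').intervalIntegrable _ _
  have hmono := integral_mono_on_of_le_Ioo (by norm_num)
    ((by fun_prop : Continuous fun t' : ℝ => (t'' - t') * c).intervalIntegrable _ _)
    (((hg.const_mul _).add hlin).add hφ) h
  have hweight : ∫ t' in (0:ℝ)..(1/2), (t'' - t') = t'' / 2 - 1/8 := by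
    rw [integral_comp_sub_left (fun t => t), integral_id]; ring
  have hweight' : ∫ t' in (0:ℝ)..(1/2), (1/2 - t') = 1/8 := by
    rw [integral_comp_sub_left (fun t => t), integral_id]; ring
  rw [intervalIntegral.integral_mul_const, hweight,
    intervalIntegral.integral_add ((hg.const_mul _).add hlin) hφ,
    intervalIntegral.integral_add (hg.const_mul _) hlin, intervalIntegral.integral_const_mul,
    intervalIntegral.integral_mul_const, hweight'] at hmono
  linarith

theorem le_integral_add_double_integral {φ : ℝ → ℝ → ℝ}
    (hg : IntervalIntegrable g volume 0 1)
    (hφ : ∀ t'' ∈ Ioo (1/2:ℝ) 1, IntervalIntegrable (fun t' => φ t' t'') volume 0 (1/2))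
    (hΦ : IntervalIntegrable (fun t'' => ∫ t' in (0:ℝ)..(1/2), φ t' t'') volume (1/2) 1)
    (h : ∀ t'' ∈ Ioo (1/2:ℝ) 1, ∀ t' ∈ Ioo (0:ℝ) (1/2),
      (t'' - t') * c ≤ (t'' - 1/2) * g t' + (1/2 - t') * g t'' + φ t' t'') :
    c ≤ (∫ t in (0:ℝ)..1, g t) +
      8 * ∫ t'' in (1/2:ℝ)..1, ∫ t' in (0:ℝ)..(1/2), φ t' t'' := by
  have hg₁ : IntervalIntegrable g volume 0 (1/2) :=
    hg.mono_set (uIcc_subset_uIcc (by simp) (by norm_num [mem_uIcc]))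
  have hg₂ : IntervalIntegrable g volume (1/2) 1 :=
    hg.mono_set (uIcc_subset_uIcc (by norm_num [mem_uIcc]) (by simp))
  have hlin : IntervalIntegrable (fun t'' => (t'' - 1/2) * ∫ t' in (0:ℝ)..(1/2), g t')
      volume (1/2) 1 :=
    (by fun_prop : Continuous fun t'' : ℝ =>
      (t'' - 1/2) * ∫ t' in (0:ℝ)..(1/2), g t').intervalIntegrable _ _
  have hmono := integral_mono_on_of_le_Ioo (by norm_num)
    ((by fun_prop : Continuous fun t'' : ℝ => (t'' / 2 - 1/8) * c).intervalIntegrable _ _)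
    ((hlin.add (hg₂.div_const 8)).add hΦ)
    fun t'' ht'' => mul_le_of_forall_Ioo_mul_le hg₁ (hφ t'' ht'') (h t'' ht'')
  have hweight : ∫ t'' in (1/2:ℝ)..1, (t'' / 2 - 1/8) = 1/8 := by
    norm_num [intervalIntegral.integral_sub, integral_id, intervalIntegral.integral_div]
  have hweight' : ∫ t'' in (1/2:ℝ)..1, (t'' - 1/2) = 1/8 := by
    rw [integral_comp_sub_right (fun t => t), integral_id]; ring
  rw [intervalIntegral.integral_mul_const, hweight,
    intervalIntegral.integral_add (hlin.add (hg₂.div_const 8)) hΦ,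
    intervalIntegral.integral_add hlin (hg₂.div_const 8), intervalIntegral.integral_mul_const,
    intervalIntegral.integral_div, hweight'] at hmono
  rw [← integral_add_adjacent_intervals hg₁ hg₂]
  linarith

end DoubleIntegral

/-- Corollary: approximate lower Hermite–Hadamard for the Lebesgue
measure: `f((x+y)/2) ≤ ∫₀¹ f((1−t)x+ty) dt + 8·I(x,y)` where
`I(x,y) = ∫_{1/2}^1 ∫_0^{1/2} (t''−t') η_{(1−t')x+t'y,(1−t'')x+t''y}((1/2−t')/(t''−t')) dt' dt''`. -/
theorem approx_lower_hh_lebesgue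
    {X : Type*} [AddCommGroup X] [Module ℝ X]
    (D : Set X) (hD : Convex ℝ D)
    (f : X → ℝ) (η : X → X → ℝ → ℝ)
    -- hemi-Lebesgue integrability of f
    (hf : ∀ x ∈ D, ∀ y ∈ D,
        IntervalIntegrable (fun t => f ((1 - t) • x + t • y)) volume 0 1)
    -- approximate convexity
    (hconv : ∀ x ∈ D, ∀ y ∈ D, x ≠ y → ∀ t ∈ Set.Icc (0:ℝ) 1,
        f ((1 - t) • x + t • y) ≤ (1 - t) * f x + t * f y + η x y t)
    -- existence (integrability) of the double error integral I(x,y)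
    (hη₁ : ∀ x ∈ D, ∀ y ∈ D, x ≠ y → ∀ t'' ∈ Set.Ioc (1/2 : ℝ) 1,
        IntervalIntegrable
          (fun t' => (t'' - t') *
            η ((1 - t') • x + t' • y) ((1 - t'') • x + t'' • y)
              ((1/2 - t') / (t'' - t')))
          volume 0 (1/2))
    (hη₂ : ∀ x ∈ D, ∀ y ∈ D, x ≠ y →
        IntervalIntegrable
          (fun t'' => ∫ t' in (0:ℝ)..(1/2), (t'' - t') *
            η ((1 - t') • x + t' • y) ((1 - t'') • x + t'' • y)
              ((1/2 - t') / (t'' - t')))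
          volume (1/2) 1) :
    ∀ x ∈ D, ∀ y ∈ D, x ≠ y →
      f ((2⁻¹ : ℝ) • (x + y)) ≤
        (∫ t in (0:ℝ)..1, f ((1 - t) • x + t • y)) +
        8 * ∫ t'' in (1/2:ℝ)..1, ∫ t' in (0:ℝ)..(1/2), (t'' - t') *
            η ((1 - t') • x + t' • y) ((1 - t'') • x + t'' • y)
              ((1/2 - t') / (t'' - t')) := by
  intro x hx y hy hxy
  have hmid : (2⁻¹ : ℝ) • (x + y) = (1 - 1/2 : ℝ) • x + (1/2 : ℝ) • y := by module
  rw [hmid]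
  refine le_integral_add_double_integral (hf x hx y hy)
    (fun t'' ht'' => hη₁ x hx y hy hxy t'' (Ioo_subset_Ioc_self ht'')) (hη₂ x hx y hy hxy)
    fun t'' ht'' t' ht' => ?_
  exact sub_mul_le_of_approxConvex hD hconv hx hy hxy ht'.1.le ht'.2.le ht''.1.le ht''.2.le
    (ht'.2.trans ht''.1)
end

section
/- (Power-type error: lower Hermite–Hadamard.) Let D be a convex subset of a real normed space X and ν a σ-finite Borel measure on [0,∞)² such that ∫ s^{p+q−1}/(2^{p+q−1}(p+1)(q+1)) dν(p,q) exists in [−∞,∞] for each s = ‖x−y‖ with x ≠ y in D. Assume f : D → ℝ is hemi-Lebesgue integrable and satisfies f((1−t)x+ty) ≤ (1−t)f(x) + t f(y) + ∫_{[0,∞)²} t^p (1−t)^q ‖x−y‖^{p+q−1} dν(p,q) for all x ≠ y in D and t ∈ [0,1]. Then f((x+y)/2) ≤ ∫₀¹ f((1−t)x+ty) dt + ∫_{[0,∞)²} ‖x−y‖^{p+q−1}/(2^{p+q−1}(p+1)(q+1)) dν(p,q) for all x ≠ y in D. -/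
/-!
Put `m = (x + y) / 2` and, for `t, u ∈ (0, 1]`, let `a` and `b` be the points of `[x, y]` at
parameters `(1 - t) / 2` and `(1 + u) / 2`. Then `m` divides `[a, b]` in the ratio `t : u` and
`‖a - b‖ = (t + u) ‖x - y‖ / 2`, so the hypothesis applied to `a, b` and multiplied by `t + u` gives
`(t + u) f(m) ≤ u f(a) + t f(b) + ∫ t^p u^q (‖x - y‖/2)^(p+q-1) dν`, the error term being
homogeneous in `(t, u)`. Averaging over the unit square, the `f`-terms become the integral of `f`
along `[x, y]`, and by Fubini the error term becomes
`∫ (‖x - y‖/2)^(p+q-1) / ((p + 1)(q + 1)) dν`.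
-/

open MeasureTheory intervalIntegral Real Set

noncomputable abbrev unitSquare : Measure (ℝ × ℝ) :=
  (volume.restrict (Ioc 0 1)).prod (volume.restrict (Ioc 0 1))

lemma ae_mem_unitSquare : ∀ᵐ w ∂unitSquare, w ∈ Ioc (0 : ℝ) 1 ×ˢ Ioc (0 : ℝ) 1 := by
  rw [unitSquare, Measure.prod_restrict]
  exact ae_restrict_mem (measurableSet_Ioc.prod measurableSet_Ioc)

lemma integral_unitSquare_mul (f g : ℝ → ℝ) :
    ∫ w, f w.1 * g w.2 ∂unitSquare = (∫ t in (0 : ℝ)..1, f t) * ∫ t in (0 : ℝ)..1, g t := by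
  rw [integral_prod_mul, integral_of_le zero_le_one, integral_of_le zero_le_one]

lemma integral_comp_half_sub_add_integral_comp_half_add {g : ℝ → ℝ}
    (hg : IntervalIntegrable g volume 0 1) :
    (∫ t in (0 : ℝ)..1, g ((1 - t) / 2)) + ∫ t in (0 : ℝ)..1, g ((1 + t) / 2) =
      2 * ∫ t in (0 : ℝ)..1, g t := by
  have hleft : ∫ t in (0 : ℝ)..1, g ((1 - t) / 2) = 2 * ∫ t in (0 : ℝ)..2⁻¹, g t := by
    simp_rw [sub_div, div_eq_mul_inv, one_mul, mul_comm _ (2⁻¹ : ℝ)]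
    rw [integral_comp_sub_mul g (by norm_num : (2⁻¹ : ℝ) ≠ 0)]
    norm_num
  have hright : ∫ t in (0 : ℝ)..1, g ((1 + t) / 2) = 2 * ∫ t in (2⁻¹ : ℝ)..1, g t := by
    simp_rw [add_div, div_eq_mul_inv, one_mul, mul_comm _ (2⁻¹ : ℝ)]
    rw [integral_comp_add_mul g (by norm_num : (2⁻¹ : ℝ) ≠ 0)]
    norm_num
  rw [hleft, hright, ← mul_add, integral_add_adjacent_intervals
    (hg.mono_set (uIcc_subset_uIcc_left (by norm_num)))
    (hg.mono_set (uIcc_subset_uIcc_right (by norm_num)))]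

lemma IntervalIntegrable.comp_half_sub {g : ℝ → ℝ} (hg : IntervalIntegrable g volume 0 1) :
    IntervalIntegrable (fun t => g ((1 - t) / 2)) volume 0 1 := by
  have h := (hg.comp_mul_left (c := 2⁻¹)).comp_sub_left 1
  norm_num at h
  simpa [div_eq_inv_mul] using h.mono_set (uIcc_subset_uIcc (by simp [uIcc]) (by simp [uIcc]))

lemma IntervalIntegrable.comp_half_add {g : ℝ → ℝ} (hg : IntervalIntegrable g volume 0 1) :
    IntervalIntegrable (fun t => g ((1 + t) / 2)) volume 0 1 := by
  have h := (hg.comp_mul_left (c := 2⁻¹)).comp_add_left 1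
  norm_num at h
  simpa [div_eq_inv_mul] using h.mono_set (uIcc_subset_uIcc (by simp [uIcc]) (by simp [uIcc]))

lemma le_integral_add_of_ae_le_unitSquare {a : ℝ} {g : ℝ → ℝ} {φ : ℝ × ℝ → ℝ}
    (hg : IntervalIntegrable g volume 0 1) (hφ : Integrable φ unitSquare)
    (h : ∀ᵐ w ∂unitSquare,
      (w.1 + w.2) * a ≤ g ((1 - w.1) / 2) * w.2 + w.1 * g ((1 + w.2) / 2) + φ w) :
    a ≤ (∫ t in (0 : ℝ)..1, g t) + ∫ w, φ w ∂unitSquare := by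
  have hid : IntervalIntegrable (fun t : ℝ => t) volume 0 1 := intervalIntegrable_id
  have ha : IntervalIntegrable (fun _ : ℝ => a) volume 0 1 := intervalIntegrable_const
  have h₁ : Integrable (fun w : ℝ × ℝ => w.1 * a) unitSquare := hid.1.mul_prod ha.1
  have h₂ : Integrable (fun w : ℝ × ℝ => a * w.2) unitSquare := ha.1.mul_prod hid.1
  have h₃ : Integrable (fun w : ℝ × ℝ => g ((1 - w.1) / 2) * w.2) unitSquare :=
    hg.comp_half_sub.1.mul_prod hid.1
  have h₄ : Integrable (fun w : ℝ × ℝ => w.1 * g ((1 + w.2) / 2)) unitSquare :=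
    hid.1.mul_prod hg.comp_half_add.1
  have h₃₄ : Integrable
      (fun w : ℝ × ℝ => g ((1 - w.1) / 2) * w.2 + w.1 * g ((1 + w.2) / 2)) unitSquare :=
    h₃.add h₄
  have hmono : ∫ w, (w.1 * a + a * w.2) ∂unitSquare ≤
      ∫ w, (g ((1 - w.1) / 2) * w.2 + w.1 * g ((1 + w.2) / 2) + φ w) ∂unitSquare :=
    integral_mono_ae (h₁.add h₂) (h₃₄.add hφ) (h.mono fun w hw => by linarith)
  have e₁ := integral_unitSquare_mul (fun t => t) (fun _ => a)
  have e₂ := integral_unitSquare_mul (fun _ => a) (fun t => t)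
  have e₃ := integral_unitSquare_mul (fun t => g ((1 - t) / 2)) (fun t => t)
  have e₄ := integral_unitSquare_mul (fun t => t) (fun t => g ((1 + t) / 2))
  norm_num at e₁ e₂ e₃ e₄
  rw [integral_add h₁ h₂, integral_add h₃₄ hφ, integral_add h₃ h₄, e₁, e₂, e₃, e₄] at hmono
  linarith [integral_comp_half_sub_add_integral_comp_half_add hg]

-- The error term of the hypothesis at `x, y, t` is `∫ powerKernel ‖x - y‖ (t, 1 - t) · ∂ν`.
noncomputable def powerKernel (c : ℝ) (w pq : ℝ × ℝ) : ℝ :=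
  w.1 ^ pq.1 * w.2 ^ pq.2 * c ^ (pq.1 + pq.2 - 1)

lemma measurable_powerKernel (c : ℝ) :
    Measurable (Function.uncurry (powerKernel c)) := by
  unfold powerKernel Function.uncurry
  fun_prop

lemma powerKernel_nonneg {c : ℝ} (hc : 0 ≤ c) {w : ℝ × ℝ} (hw : 0 ≤ w.1 ∧ 0 ≤ w.2) (pq : ℝ × ℝ) :
    0 ≤ powerKernel c w pq := by
  obtain ⟨_, _⟩ := hw
  unfold powerKernel
  positivity

lemma mul_powerKernel_div {r c a b : ℝ} (hr : 0 < r) (hc : 0 ≤ c) (ha : 0 ≤ a) (hb : 0 ≤ b)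
    (pq : ℝ × ℝ) : r * powerKernel (r * c) (a / r, b / r) pq = powerKernel c (a, b) pq := by
  obtain ⟨p, q⟩ := pq
  simp only [powerKernel]
  rw [div_rpow ha hr.le, div_rpow hb hr.le, mul_rpow hr.le hc, rpow_sub hr, rpow_add hr, rpow_one]
  have : r ^ p ≠ 0 := (rpow_pos_of_pos hr p).ne'
  have : r ^ q ≠ 0 := (rpow_pos_of_pos hr q).ne'
  field_simp

lemma integral_rpow_zero_one {p : ℝ} (hp : -1 < p) : ∫ t in (0 : ℝ)..1, t ^ p = 1 / (p + 1) := by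
  rw [integral_rpow (Or.inl hp), one_rpow, zero_rpow (by linarith), sub_zero]

lemma integrable_powerKernel_unitSquare (c : ℝ) {p q : ℝ} (hp : -1 < p) (hq : -1 < q) :
    Integrable (fun w => powerKernel c w (p, q)) unitSquare :=
  ((intervalIntegrable_rpow' hp).1.mul_prod (intervalIntegrable_rpow' hq).1).mul_const _

lemma integral_powerKernel_unitSquare (c : ℝ) {p q : ℝ} (hp : -1 < p) (hq : -1 < q) :
    ∫ w, powerKernel c w (p, q) ∂unitSquare = c ^ (p + q - 1) / ((p + 1) * (q + 1)) := by
  have e := integral_unitSquare_mul (fun t => t ^ p) (fun t => t ^ q)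
  simp only [integral_rpow_zero_one hp, integral_rpow_zero_one hq] at e
  simp only [powerKernel]
  rw [MeasureTheory.integral_mul_const, e]
  field_simp

lemma integral_unitSquare_integral_powerKernel {ν : Measure (ℝ × ℝ)} [SFinite ν] {c : ℝ}
    (hc : 0 ≤ c) (hν : ∀ᵐ pq ∂ν, -1 < pq.1 ∧ -1 < pq.2)
    (hint : Integrable (fun pq : ℝ × ℝ => c ^ (pq.1 + pq.2 - 1) / ((pq.1 + 1) * (pq.2 + 1))) ν) :
    Integrable (fun w => ∫ pq, powerKernel c w pq ∂ν) unitSquare ∧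
      ∫ w, ∫ pq, powerKernel c w pq ∂ν ∂unitSquare =
        ∫ pq, c ^ (pq.1 + pq.2 - 1) / ((pq.1 + 1) * (pq.2 + 1)) ∂ν := by
  have hK : Integrable (Function.uncurry (powerKernel c)) (unitSquare.prod ν) := by
    rw [integrable_prod_iff' (measurable_powerKernel c).aestronglyMeasurable]
    refine ⟨hν.mono fun pq hpq => integrable_powerKernel_unitSquare c hpq.1 hpq.2, hint.congr ?_⟩
    filter_upwards [hν] with pq hpq
    rw [← integral_powerKernel_unitSquare c hpq.1 hpq.2]
    refine integral_congr_ae (ae_mem_unitSquare.mono fun w hw => ?_)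
    exact (Real.norm_of_nonneg (powerKernel_nonneg hc ⟨hw.1.1.le, hw.2.1.le⟩ _)).symm
  refine ⟨hK.integral_prod_left, (integral_integral_swap hK).trans (integral_congr_ae ?_)⟩
  filter_upwards [hν] with pq hpq
  exact integral_powerKernel_unitSquare c hpq.1 hpq.2

lemma add_mul_le_of_powerKernel_convex {X : Type*} [NormedAddCommGroup X] [NormedSpace ℝ X]
    {D : Set X} (hD : Convex ℝ D) {ν : Measure (ℝ × ℝ)} {f : X → ℝ}
    (hconv : ∀ x ∈ D, ∀ y ∈ D, x ≠ y → ∀ t ∈ Icc (0 : ℝ) 1,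
      f ((1 - t) • x + t • y) ≤ (1 - t) * f x + t * f y + ∫ pq, powerKernel ‖x - y‖ (t, 1 - t) pq ∂ν)
    {x y : X} (hx : x ∈ D) (hy : y ∈ D) (hxy : x ≠ y) {t u : ℝ} (ht : t ∈ Ioc (0 : ℝ) 1)
    (hu : u ∈ Ioc (0 : ℝ) 1) :
    (t + u) * f ((2⁻¹ : ℝ) • (x + y)) ≤
      f ((1 - (1 - t) / 2) • x + ((1 - t) / 2) • y) * u +
        t * f ((1 - (1 + u) / 2) • x + ((1 + u) / 2) • y) +
        ∫ pq, powerKernel (‖x - y‖ / 2) (t, u) pq ∂ν := by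
  obtain ⟨ht₀, ht₁⟩ := ht
  obtain ⟨hu₀, hu₁⟩ := hu
  have htu : 0 < t + u := by linarith
  set a := (1 - (1 - t) / 2) • x + ((1 - t) / 2) • y
  set b := (1 - (1 + u) / 2) • x + ((1 + u) / 2) • y
  have ha : a ∈ D := hD hx hy (by linarith) (by linarith) (by ring)
  have hb : b ∈ D := hD hx hy (by linarith) (by linarith) (by ring)
  have hab : b - a = ((t + u) / 2) • (y - x) := by
    simp only [a, b]; match_scalars <;> ring
  have hnorm : ‖a - b‖ = (t + u) * (‖x - y‖ / 2) := by
    rw [← norm_neg, neg_sub, hab, norm_smul, norm_sub_rev, Real.norm_of_nonneg (by positivity)]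
    ring
  have hne : a ≠ b := fun h => by
    rw [h, sub_self, eq_comm, smul_eq_zero] at hab
    exact hab.elim (by positivity : (t + u) / 2 ≠ 0) fun h' => hxy (sub_eq_zero.mp h').symm
  have hl : t / (t + u) ∈ Icc (0 : ℝ) 1 :=
    ⟨by positivity, (div_le_one htu).mpr (by linarith)⟩
  have hl' : 1 - t / (t + u) = u / (t + u) := by field_simp; ring
  have hmid : (1 - t / (t + u)) • a + (t / (t + u)) • b = (2⁻¹ : ℝ) • (x + y) := by
    simp only [a, b, hl']; match_scalars <;> field_simp <;> ring
  have hweights : (t + u) * ((1 - t / (t + u)) * f a + t / (t + u) * f b) = f a * u + t * f b := by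
    rw [hl']; field_simp
  have herror : (t + u) * ∫ pq, powerKernel ‖a - b‖ (t / (t + u), 1 - t / (t + u)) pq ∂ν =
      ∫ pq, powerKernel (‖x - y‖ / 2) (t, u) pq ∂ν := by
    rw [← MeasureTheory.integral_const_mul, hl', hnorm]
    simp only [mul_powerKernel_div htu (by positivity : 0 ≤ ‖x - y‖ / 2) ht₀.le hu₀.le]
  have h := mul_le_mul_of_nonneg_left (hconv a ha b hb hne _ hl) htu.le
  rw [hmid, mul_add, hweights, herror] at h
  exact h

theorem approx_lower_hh_power_error_general
    {X : Type*} [NormedAddCommGroup X] [NormedSpace ℝ X]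
    (D : Set X) (hD : Convex ℝ D)
    (ν : Measure (ℝ × ℝ)) [SigmaFinite ν]
    -- ν is a Borel measure concentrated on [0,∞)²
    (hν : ν {pq : ℝ × ℝ | ¬ (0 ≤ pq.1 ∧ 0 ≤ pq.2)} = 0)
    (f : X → ℝ)
    -- hemi-Lebesgue integrability of f
    (hf : ∀ x ∈ D, ∀ y ∈ D,
        IntervalIntegrable (fun t => f ((1 - t) • x + t • y)) volume 0 1)
    -- existence (integrability) of the error integrals
    (hJ : ∀ x ∈ D, ∀ y ∈ D, x ≠ y →
        Integrable (fun pq : ℝ × ℝ =>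
          ‖x - y‖ ^ (pq.1 + pq.2 - 1) /
            ((2:ℝ) ^ (pq.1 + pq.2 - 1) * (pq.1 + 1) * (pq.2 + 1))) ν)
    -- approximate convexity with power-type error
    (hconv : ∀ x ∈ D, ∀ y ∈ D, x ≠ y → ∀ t ∈ Set.Icc (0:ℝ) 1,
        f ((1 - t) • x + t • y) ≤ (1 - t) * f x + t * f y +
          ∫ pq : ℝ × ℝ,
            t ^ pq.1 * (1 - t) ^ pq.2 * ‖x - y‖ ^ (pq.1 + pq.2 - 1) ∂ν) :
    ∀ x ∈ D, ∀ y ∈ D, x ≠ y →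
      f ((2⁻¹ : ℝ) • (x + y)) ≤
        (∫ t in (0:ℝ)..1, f ((1 - t) • x + t • y)) +
        ∫ pq : ℝ × ℝ,
          ‖x - y‖ ^ (pq.1 + pq.2 - 1) /
            ((2:ℝ) ^ (pq.1 + pq.2 - 1) * (pq.1 + 1) * (pq.2 + 1)) ∂ν := by
  intro x hx y hy hxy
  have hν' : ∀ᵐ pq ∂ν, -1 < pq.1 ∧ -1 < pq.2 :=
    (ae_iff.2 hν).mono fun pq hpq => ⟨by linarith [hpq.1], by linarith [hpq.2]⟩
  have hhalf : (fun pq : ℝ × ℝ => ‖x - y‖ ^ (pq.1 + pq.2 - 1) /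
      ((2:ℝ) ^ (pq.1 + pq.2 - 1) * (pq.1 + 1) * (pq.2 + 1))) =
      fun pq => (‖x - y‖ / 2) ^ (pq.1 + pq.2 - 1) / ((pq.1 + 1) * (pq.2 + 1)) := by
    funext pq
    rw [div_rpow (norm_nonneg _) zero_le_two, mul_assoc, div_div]
  obtain ⟨hφ, hφ_eq⟩ :=
    integral_unitSquare_integral_powerKernel (by positivity) hν' (hhalf ▸ hJ x hx y hy hxy)
  have key := ae_mem_unitSquare.mono fun w hw =>
    add_mul_le_of_powerKernel_convex hD hconv hx hy hxy hw.1 hw.2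
  have h := le_integral_add_of_ae_le_unitSquare (hf x hx y hy) hφ key
  rwa [hφ_eq, ← hhalf] at h

/-- power-type error, lower Hermite–Hadamard: if
`f((1−t)x+ty) ≤ (1−t)f(x)+tf(y) + ∫ t^p(1−t)^q‖x−y‖^{p+q−1} dν(p,q)`, then
`f((x+y)/2) ≤ ∫₀¹ f((1−t)x+ty) dt + ∫ ‖x−y‖^{p+q−1}/(2^{p+q−1}(p+1)(q+1)) dν(p,q)`. -/
theorem approx_lower_hh_power_error
    {X : Type*} [NormedAddCommGroup X] [NormedSpace ℝ X]
    (D : Set X) (hD : Convex ℝ D)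
    (ν : Measure (ℝ × ℝ)) [SigmaFinite ν]
    -- ν is a Borel measure concentrated on [0,∞)²
    (hν : ν {pq : ℝ × ℝ | ¬ (0 ≤ pq.1 ∧ 0 ≤ pq.2)} = 0)
    (f : X → ℝ)
    -- hemi-Lebesgue integrability of f
    (hf : ∀ x ∈ D, ∀ y ∈ D,
        IntervalIntegrable (fun t => f ((1 - t) • x + t • y)) volume 0 1)
    -- existence (integrability) of the error integrals
    (herr : ∀ x ∈ D, ∀ y ∈ D, x ≠ y → ∀ t ∈ Set.Icc (0:ℝ) 1,
        Integrable (fun pq : ℝ × ℝ =>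
          t ^ pq.1 * (1 - t) ^ pq.2 * ‖x - y‖ ^ (pq.1 + pq.2 - 1)) ν)
    (hJ : ∀ x ∈ D, ∀ y ∈ D, x ≠ y →
        Integrable (fun pq : ℝ × ℝ =>
          ‖x - y‖ ^ (pq.1 + pq.2 - 1) /
            ((2:ℝ) ^ (pq.1 + pq.2 - 1) * (pq.1 + 1) * (pq.2 + 1))) ν)
    -- approximate convexity with power-type error
    (hconv : ∀ x ∈ D, ∀ y ∈ D, x ≠ y → ∀ t ∈ Set.Icc (0:ℝ) 1,
        f ((1 - t) • x + t • y) ≤ (1 - t) * f x + t * f y +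
          ∫ pq : ℝ × ℝ,
            t ^ pq.1 * (1 - t) ^ pq.2 * ‖x - y‖ ^ (pq.1 + pq.2 - 1) ∂ν) :
    ∀ x ∈ D, ∀ y ∈ D, x ≠ y →
      f ((2⁻¹ : ℝ) • (x + y)) ≤
        (∫ t in (0:ℝ)..1, f ((1 - t) • x + t • y)) +
        ∫ pq : ℝ × ℝ,
          ‖x - y‖ ^ (pq.1 + pq.2 - 1) /
            ((2:ℝ) ^ (pq.1 + pq.2 - 1) * (pq.1 + 1) * (pq.2 + 1)) ∂ν :=
  approx_lower_hh_power_error_general D hD ν hν f hf hJ hconv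
end

section
/- (Approximate upper Hermite–Hadamard for (ω₀,ω₁)-convexity.) Assume (B1)–(B4): (T,𝒜,μ) is a measure space; Λ : T × Δ°(I) → ℝ₊ is μ-integrable in its first variable; M(t,·,·) is a two-variable mean on I, measurable in t; M₀ is a strict mean; (ω₀,ω₁) is a Chebyshev system on I with ω₀ > 0 satisfying ωᵢ(M₀(x,y)) = ∫_T Λ(t,x,y)ωᵢ(M(t,x,y))dμ(t) for i = 0,1. Let f : I → ℝ be a locally bounded Borel measurable function satisfying f(u) ≤ (Ω(u,y)/Ω(x,y))f(x) + (Ω(x,u)/Ω(x,y))f(y) + ε_{x,y}(u) for all x < y and u ∈ [x,y], with ε_{x,y} bounded and Borel measurable on [x,y]. Then ∫_T Λ(t,x,y) f(M(t,x,y)) dμ(t) ≤ (Ω(M₀(x,y),y)/Ω(x,y))·f(x) + (Ω(x,M₀(x,y))/Ω(x,y))·f(y) + ∫_T Λ(t,x,y)·ε_{x,y}(M(t,x,y)) dμ(t) for all x < y in I. -/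
open MeasureTheory

/-- Theorem 5: approximate upper Hermite–Hadamard for approximate
`(ω₀,ω₁)`-convexity: under (B1)–(B4),
`∫_T Λ f(M) dμ ≤ (Ω(M₀,y)/Ω(x,y))f(x) + (Ω(x,M₀)/Ω(x,y))f(y) + ∫_T Λ ε_{x,y}(M) dμ`. -/
theorem approx_upper_hermite_hadamard
    (a b : ℝ) (hab : a < b)
    (ω₀ ω₁ : ℝ → ℝ)
    (hc₀ : ContinuousOn ω₀ (Set.Ioo a b)) (hc₁ : ContinuousOn ω₁ (Set.Ioo a b))
    (hω₀pos : ∀ z ∈ Set.Ioo a b, 0 < ω₀ z)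
    (hcheb : ∀ u ∈ Set.Ioo a b, ∀ v ∈ Set.Ioo a b, u < v →
        0 < ω₀ u * ω₁ v - ω₀ v * ω₁ u)
    {T : Type*} [MeasurableSpace T] (μ : Measure T)
    (Λ M : T → ℝ → ℝ → ℝ) (M₀ : ℝ → ℝ → ℝ)
    (hΛnn : ∀ t x y, 0 ≤ Λ t x y)
    (hΛint : ∀ x ∈ Set.Ioo a b, ∀ y ∈ Set.Ioo a b, x < y →
        Integrable (fun t => Λ t x y) μ)
    (hMmeas : ∀ x y, Measurable (fun t => M t x y))
    (hMmean : ∀ t, ∀ x ∈ Set.Ioo a b, ∀ y ∈ Set.Ioo a b, x < y →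
        M t x y ∈ Set.Icc x y)
    (hM₀strict : ∀ x ∈ Set.Ioo a b, ∀ y ∈ Set.Ioo a b, x < y →
        M₀ x y ∈ Set.Ioo x y)
    (hint₀ : ∀ x ∈ Set.Ioo a b, ∀ y ∈ Set.Ioo a b, x < y →
        Integrable (fun t => Λ t x y * ω₀ (M t x y)) μ)
    (hint₁ : ∀ x ∈ Set.Ioo a b, ∀ y ∈ Set.Ioo a b, x < y →
        Integrable (fun t => Λ t x y * ω₁ (M t x y)) μ)
    (hrep₀ : ∀ x ∈ Set.Ioo a b, ∀ y ∈ Set.Ioo a b, x < y →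
        ω₀ (M₀ x y) = ∫ t, Λ t x y * ω₀ (M t x y) ∂μ)
    (hrep₁ : ∀ x ∈ Set.Ioo a b, ∀ y ∈ Set.Ioo a b, x < y →
        ω₁ (M₀ x y) = ∫ t, Λ t x y * ω₁ (M t x y) ∂μ)
    -- f : locally bounded, Borel measurable, hemi-integrable along the means
    (f : ℝ → ℝ) (hfmeas : Measurable f)
    (hfbdd : ∀ x ∈ Set.Ioo a b, ∀ y ∈ Set.Ioo a b, x < y →
        ∃ C, ∀ u ∈ Set.Icc x y, |f u| ≤ C)
    (hfint : ∀ x ∈ Set.Ioo a b, ∀ y ∈ Set.Ioo a b, x < y →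
        Integrable (fun t => Λ t x y * f (M t x y)) μ)
    -- the error function: bounded and Borel measurable on [x,y]
    (eps : ℝ → ℝ → ℝ → ℝ)
    (hepsreg : ∀ x ∈ Set.Ioo a b, ∀ y ∈ Set.Ioo a b, x < y →
        (∃ C, ∀ u ∈ Set.Icc x y, |eps x y u| ≤ C) ∧ Measurable (eps x y))
    (hepsint : ∀ x ∈ Set.Ioo a b, ∀ y ∈ Set.Ioo a b, x < y →
        Integrable (fun t => Λ t x y * eps x y (M t x y)) μ)
    -- approximate (ω₀,ω₁)-convexity
    (hconv : ∀ x ∈ Set.Ioo a b, ∀ y ∈ Set.Ioo a b, x < y → ∀ u ∈ Set.Icc x y,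
        f u ≤ (ω₀ u * ω₁ y - ω₀ y * ω₁ u) / (ω₀ x * ω₁ y - ω₀ y * ω₁ x) * f x +
          (ω₀ x * ω₁ u - ω₀ u * ω₁ x) / (ω₀ x * ω₁ y - ω₀ y * ω₁ x) * f y +
          eps x y u) :
    ∀ x ∈ Set.Ioo a b, ∀ y ∈ Set.Ioo a b, x < y →
      (∫ t, Λ t x y * f (M t x y) ∂μ) ≤
        (ω₀ (M₀ x y) * ω₁ y - ω₀ y * ω₁ (M₀ x y)) /
            (ω₀ x * ω₁ y - ω₀ y * ω₁ x) * f x +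
        (ω₀ x * ω₁ (M₀ x y) - ω₀ (M₀ x y) * ω₁ x) /
            (ω₀ x * ω₁ y - ω₀ y * ω₁ x) * f y +
        ∫ t, Λ t x y * eps x y (M t x y) ∂μ := by

  intro x hx y hy hxy
  set Δ := ω₀ x * ω₁ y - ω₀ y * ω₁ x with hΔ
  set c1 := (ω₁ y * f x - ω₁ x * f y) / Δ with hc1
  set c2 := (ω₀ x * f y - ω₀ y * f x) / Δ with hc2
  have h0 := hint₀ x hx y hy hxy
  have h1 := hint₁ x hx y hy hxy
  have he := hepsint x hx y hy hxy
  have hg : Integrable (fun t => c1 * (Λ t x y * ω₀ (M t x y)) +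
      c2 * (Λ t x y * ω₁ (M t x y)) + Λ t x y * eps x y (M t x y)) μ :=
    ((h0.const_mul c1).add (h1.const_mul c2)).add he
  have hmono : (∫ t, Λ t x y * f (M t x y) ∂μ) ≤
      ∫ t, (c1 * (Λ t x y * ω₀ (M t x y)) +
        c2 * (Λ t x y * ω₁ (M t x y)) + Λ t x y * eps x y (M t x y)) ∂μ := by
    refine integral_mono (hfint x hx y hy hxy) hg ?_
    intro t
    have hM := hMmean t x hx y hy hxy
    have hcv := hconv x hx y hy hxy (M t x y) hM
    have := mul_le_mul_of_nonneg_left hcv (hΛnn t x y)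
    calc Λ t x y * f (M t x y) ≤ Λ t x y *
        ((ω₀ (M t x y) * ω₁ y - ω₀ y * ω₁ (M t x y)) / Δ * f x +
          (ω₀ x * ω₁ (M t x y) - ω₀ (M t x y) * ω₁ x) / Δ * f y +
          eps x y (M t x y)) := this
      _ = c1 * (Λ t x y * ω₀ (M t x y)) + c2 * (Λ t x y * ω₁ (M t x y)) +
          Λ t x y * eps x y (M t x y) := by
        simp only [hc1, hc2]; ring
  refine hmono.trans_eq ?_
  have h01 : Integrable (fun t => c1 * (Λ t x y * ω₀ (M t x y)) +
      c2 * (Λ t x y * ω₁ (M t x y))) μ := by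
    exact (h0.const_mul c1).add (h1.const_mul c2)
  have ha : Integrable (fun t => c1 * (Λ t x y * ω₀ (M t x y))) μ := h0.const_mul c1
  have hb : Integrable (fun t => c2 * (Λ t x y * ω₁ (M t x y))) μ := h1.const_mul c2
  rw [integral_add h01 he, integral_add ha hb,
    integral_const_mul, integral_const_mul, ← hrep₀ x hx y hy hxy,
    ← hrep₁ x hx y hy hxy]
  simp only [hc1, hc2]
  ring
end
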